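/- arXiv:2601.08460 — 13 statements merged into one kernel-verified Lean document; each statement's English description precedes it below -/
import Mathlib

section
/- Let (x, z) be an element of the Decision Programming feasible set DP, and suppose Γ is a valid path big-M, p(s) ≥ 0 for all s ∈ S, and U(s) > 0 for all s ∈ S. Define x* : S^> → ℝ by x*(s) = 1 if max_{s' ∈ E^>(s_O)} x(s') > 0 and x*(s) = 0 otherwise, where s_O is the restriction of s to the observation set O. Then (x*, z) is also an element of DP; moreover, if there exists s ∈ S^> with x(s) ≠ x*(s), then Σ_{s∈S^>} p(s)U(s)x(s) < Σ_{s∈S^>} p(s)U(s)x*(s). -/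
open Finset

namespace InfluenceDiagram

attribute [local instance] Classical.propDecidable

variable {ν : Type} [Fintype ν] [DecidableEq ν]

noncomputable section
variable (St : ν → Type) [∀ n, Fintype (St n)] [∀ n, DecidableEq (St n)] [∀ n, Nonempty (St n)]
  (D : Finset ν) (I : ν → Finset ν)

/-- A segment over a subset `M` of nodes: a choice of state for each node in `M`. -/
abbrev Seg (M : Finset ν) : Type := ∀ n : M, St n.1

/-- A path: a choice of state for every (chance or decision) node. -/
abbrev Path : Type := ∀ n, St n

/-- A z-assignment: for each decision node `d`, each alternative `s_d` and each
information state `s_{I(d)}`, a real number `z(s_d ∣ s_{I(d)})`. -/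
abbrev ZAsg : Type := (d : ν) → d ∈ D → St d → Seg St (I d) → ℝ

/-- `z` is a (binary, locally exhaustive) decision strategy. -/
def Strategy (z : ZAsg St D I) : Prop :=
  (∀ (d : ν) (hd : d ∈ D) (sd : St d) (sI : Seg St (I d)),
      z d hd sd sI = 0 ∨ z d hd sd sI = 1) ∧
  ∀ (d : ν) (hd : d ∈ D) (sI : Seg St (I d)), ∑ sd : St d, z d hd sd sI = 1

/-- A path is compatible with `z` if every decision on it is selected by `z`. -/
def PathCompat (z : ZAsg St D I) (s : Path St) : Prop :=
  ∀ (d : ν) (hd : d ∈ D), z d hd (s d) (fun n => s n.1) = 1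

/-- The Decision Programming feasible set (constraints (2)-(5) of the paper). -/
def DP (p : Path St → ℝ) (Γ z : ZAsg St D I) (x : Path St → ℝ) : Prop :=
  Strategy St D I z ∧
  (∀ s : Path St, 0 < p s → 0 ≤ x s ∧ x s ≤ 1) ∧
  ∀ (d : ν) (hd : d ∈ D) (sd : St d) (sI : Seg St (I d)),
    ∑ s ∈ univ.filter (fun s : Path St =>
        0 < p s ∧ s d = sd ∧ ∀ n : I d, s n.1 = sI n), x s
      ≤ Γ d hd sd sI * z d hd sd sI

/-- `Γ` is a valid path big-M: for every strategy `z`, the number of `z`-compatible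
paths in `E^>(s_d, s_{I(d)})` is at most `Γ(s_d ∣ s_{I(d)})`. -/
def ValidPathBigM (p : Path St → ℝ) (Γ : ZAsg St D I) : Prop :=
  ∀ z : ZAsg St D I, Strategy St D I z →
    ∀ (d : ν) (hd : d ∈ D) (sd : St d) (sI : Seg St (I d)),
      ((univ.filter (fun s : Path St =>
          PathCompat St D I z s ∧ 0 < p s ∧ s d = sd ∧ ∀ n : I d, s n.1 = sI n)).card : ℝ)
        ≤ Γ d hd sd sI

/-- The chance nodes observed by some decision node. -/
def CIset : Finset ν := Dᶜ.filter fun c => ∃ d ∈ D, c ∈ I d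

/-- The observation set `O = D ∪ C_I`. -/
def obsSet : Finset ν := D ∪ CIset D I

lemma mem_obsSet_of_mem_D {d : ν} (hd : d ∈ D) : d ∈ obsSet D I :=
  Finset.mem_union_left _ hd

lemma mem_obsSet_of_mem_CI {n : ν} (hn : n ∈ CIset D I) : n ∈ obsSet D I :=
  Finset.mem_union_right _ hn

lemma mem_obsSet_of_mem_I {d n : ν} (hd : d ∈ D) (hn : n ∈ I d) : n ∈ obsSet D I := by
  by_cases h : n ∈ D
  · exact Finset.mem_union_left _ h
  · exact Finset.mem_union_right _ (Finset.mem_filter.mpr ⟨Finset.mem_compl.mpr h, ⟨d, hd, hn⟩⟩)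

/-- Observable segments: segments over the observation set `O`. -/
abbrev OSeg : Type := Seg St (obsSet D I)

/-- An observable segment is compatible with `z` if every decision on it is selected by `z`. -/
def SegCompat (z : ZAsg St D I) (t : OSeg St D I) : Prop :=
  ∀ (d : ν) (hd : d ∈ D),
    z d hd (t ⟨d, mem_obsSet_of_mem_D D I hd⟩)
      (fun n => t ⟨n.1, mem_obsSet_of_mem_I D I hd n.2⟩) = 1

/-- The reformulated Decision Programming feasible set. -/
def RDP (Γ z : ZAsg St D I) (y : OSeg St D I → ℝ) : Prop :=
  Strategy St D I z ∧
  (∀ t : OSeg St D I, 0 ≤ y t ∧ y t ≤ 1) ∧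
  ∀ (d : ν) (hd : d ∈ D) (sd : St d) (sI : Seg St (I d)),
    ∑ t ∈ univ.filter (fun t : OSeg St D I =>
        t ⟨d, mem_obsSet_of_mem_D D I hd⟩ = sd ∧
        ∀ n : I d, t ⟨n.1, mem_obsSet_of_mem_I D I hd n.2⟩ = sI n), y t
      ≤ Γ d hd sd sI * z d hd sd sI

/-- `Γ` is a valid segment big-M: for every strategy `z`, the number of `z`-compatible
observable segments in `E_O(s_d, s_{I(d)})` is at most `Γ(s_d ∣ s_{I(d)})`. -/
def ValidSegBigM (Γ : ZAsg St D I) : Prop :=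
  ∀ z : ZAsg St D I, Strategy St D I z →
    ∀ (d : ν) (hd : d ∈ D) (sd : St d) (sI : Seg St (I d)),
      ((univ.filter (fun t : OSeg St D I =>
          SegCompat St D I z t ∧
          t ⟨d, mem_obsSet_of_mem_D D I hd⟩ = sd ∧
          ∀ n : I d, t ⟨n.1, mem_obsSet_of_mem_I D I hd n.2⟩ = sI n)).card : ℝ)
        ≤ Γ d hd sd sI

/-- Expected utility `𝔼_U(s_O) = Σ_{s ∈ E(s_O)} p(s) U(s)` of an observable segment. -/
def segEU (p U : Path St → ℝ) (t : OSeg St D I) : ℝ :=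
  ∑ s ∈ univ.filter (fun s : Path St => ∀ n : obsSet D I, s n.1 = t n), p s * U s

/-- The Decision Programming objective `Σ_{s ∈ S^>} p(s) U(s) x(s)`. -/
def DPobj (p U : Path St → ℝ) (x : Path St → ℝ) : ℝ :=
  ∑ s ∈ univ.filter (fun s : Path St => 0 < p s), p s * U s * x s

/-- The reformulated objective `Σ_{s_O ∈ S_O} 𝔼_U(s_O) y(s_O)`. -/
def RDPobj (p U : Path St → ℝ) (y : OSeg St D I → ℝ) : ℝ :=
  ∑ t : OSeg St D I, segEU St D I p U t * y t

/-- The influence diagram is acyclic: there is a rank function decreasing along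
information arcs. -/
def Acyclic : Prop := ∃ r : ν → ℕ, ∀ n : ν, ∀ m ∈ I n, r m < r n

/-- Proposition 1: if `(x, z)` is DP-feasible, `Γ` is a valid path
big-M, `p ≥ 0` and `U > 0`, then the "rounded-up" solution `x*` (which is `1` on a
positive-probability path `s` iff some positive-probability path with the same
observable segment has a positive `x`-value, i.e. iff `max_{s' ∈ E^>(s_O)} x(s') > 0`)
is again DP-feasible together with `z`; moreover if `x ≠ x*` somewhere on `S^>`,
then `x` has a strictly smaller objective value than `x*`. -/
theorem statement0 (p U : Path St → ℝ) (Γ z : ZAsg St D I) (x : Path St → ℝ)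
    (hΓ : ValidPathBigM St D I p Γ)
    (hp : ∀ s : Path St, 0 ≤ p s) (hU : ∀ s : Path St, 0 < U s)
    (hDP : DP St D I p Γ z x)
    (xstar : Path St → ℝ)
    (hxstar : ∀ s : Path St,
      xstar s =
        if ∃ s' : Path St, 0 < p s' ∧ (∀ n : obsSet D I, s' n.1 = s n.1) ∧ 0 < x s'
        then 1 else 0) :
    DP St D I p Γ z xstar ∧
      ((∃ s : Path St, 0 < p s ∧ x s ≠ xstar s) →
        DPobj St p U x < DPobj St p U xstar) := by
  obtain ⟨hz, hbound, hcon⟩ := hDP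
  have hzbin := hz.1
  have hxs01 : ∀ s, xstar s = 0 ∨ xstar s = 1 := by
    intro s; rw [hxstar s]; split
    · exact Or.inr rfl
    · exact Or.inl rfl
  -- Any positive-probability path with positive x-value is z-compatible.
  have hcompat : ∀ s : Path St, 0 < p s → 0 < x s → PathCompat St D I z s := by
    intro s hps hxs d hd
    have hsum : 0 < ∑ s' ∈ univ.filter (fun s' : Path St =>
        0 < p s' ∧ s' d = s d ∧ ∀ n : I d, s' n.1 = (fun n : I d => s n.1) n), x s' := by
      apply Finset.sum_pos'
      · intro i hi
        exact (hbound i (Finset.mem_filter.mp hi).2.1).1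
      · exact ⟨s, by simp [hps], hxs⟩
    have hc := hcon d hd (s d) (fun n => s n.1)
    rcases hzbin d hd (s d) (fun n => s n.1) with h0 | h1
    · exfalso
      rw [h0, mul_zero] at hc
      exact absurd (lt_of_lt_of_le hsum hc) (lt_irrefl 0)
    · exact h1
  -- Any positive-probability path with xstar = 1 is z-compatible.
  have hstarcompat : ∀ s : Path St, 0 < p s → xstar s = 1 → PathCompat St D I z s := by
    intro s hps h1
    rw [hxstar s] at h1
    split at h1
    case isTrue h =>
      obtain ⟨s', hps', hag, hxs'⟩ := h
      have hcs' := hcompat s' hps' hxs'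
      intro d hd
      have hd' : s' d = s d := hag ⟨d, mem_obsSet_of_mem_D D I hd⟩
      have hI : (fun n : I d => s n.1) = (fun n : I d => s' n.1) := by
        funext n; exact (hag ⟨n.1, mem_obsSet_of_mem_I D I hd n.2⟩).symm
      rw [← hd', hI]
      exact hcs' d hd
    case isFalse h => norm_num at h1
  -- Constraint (5) for xstar
  have hcon' : ∀ (d : ν) (hd : d ∈ D) (sd : St d) (sI : Seg St (I d)),
      ∑ s ∈ univ.filter (fun s : Path St =>
          0 < p s ∧ s d = sd ∧ ∀ n : I d, s n.1 = sI n), xstar s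
        ≤ Γ d hd sd sI * z d hd sd sI := by
    intro d hd sd sI
    set A := univ.filter (fun s : Path St =>
        0 < p s ∧ s d = sd ∧ ∀ n : I d, s n.1 = sI n) with hA
    rcases hzbin d hd sd sI with h0 | h1
    · rw [h0, mul_zero]
      have hz0 : ∀ s ∈ A, xstar s = 0 := by
        intro s hs
        rcases hxs01 s with h | h
        · exact h
        · exfalso
          obtain ⟨hps, hsd, hsI⟩ := (Finset.mem_filter.mp hs).2
          have hcpt := hstarcompat s hps h d hd
          have hseg : (fun n : I d => s n.1) = sI := funext hsI
          rw [hsd, hseg, h0] at hcpt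
          norm_num at hcpt
      rw [Finset.sum_eq_zero hz0]
    · rw [h1, mul_one]
      have hle1 : ∑ s ∈ A, xstar s ≤ ∑ s ∈ A, (if xstar s = 1 then (1:ℝ) else 0) := by
        apply Finset.sum_le_sum
        intro i _
        rcases hxs01 i with h | h <;> simp [h]
      have hcard : ∑ s ∈ A, (if xstar s = 1 then (1:ℝ) else 0)
          = ((A.filter fun s => xstar s = 1).card : ℝ) := by
        rw [Finset.sum_boole]
      have hsub : A.filter (fun s => xstar s = 1) ⊆
          univ.filter (fun s : Path St => PathCompat St D I z s ∧ 0 < p s ∧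
            s d = sd ∧ ∀ n : I d, s n.1 = sI n) := by
        intro s hs
        obtain ⟨hsA, hs1⟩ := Finset.mem_filter.mp hs
        obtain ⟨hps, hsd, hsI⟩ := (Finset.mem_filter.mp hsA).2
        simp only [Finset.mem_filter, Finset.mem_univ, true_and]
        exact ⟨hstarcompat s hps hs1, hps, hsd, hsI⟩
      have hcardle : ((A.filter fun s => xstar s = 1).card : ℝ)
          ≤ ((univ.filter (fun s : Path St => PathCompat St D I z s ∧ 0 < p s ∧
            s d = sd ∧ ∀ n : I d, s n.1 = sI n)).card : ℝ) := by
        exact_mod_cast Finset.card_le_card hsub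
      calc ∑ s ∈ A, xstar s ≤ _ := hle1
        _ = _ := hcard
        _ ≤ _ := hcardle
        _ ≤ Γ d hd sd sI := hΓ z hz d hd sd sI
  -- Pointwise domination x ≤ xstar on S^>
  have hle : ∀ s : Path St, 0 < p s → x s ≤ xstar s := by
    intro s hps
    by_cases hx : 0 < x s
    · have h1 : xstar s = 1 := by
        rw [hxstar s, if_pos ⟨s, hps, fun n => rfl, hx⟩]
      rw [h1]; exact (hbound s hps).2
    · push_neg at hx
      have h0 : x s = 0 := le_antisymm hx (hbound s hps).1
      rw [h0]
      rcases hxs01 s with h | h <;> rw [h] <;> norm_num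
  constructor
  · refine ⟨hz, fun s _ => ?_, hcon'⟩
    rcases hxs01 s with h | h <;> rw [h] <;> norm_num
  · rintro ⟨s0, hps0, hne⟩
    unfold DPobj
    apply Finset.sum_lt_sum
    · intro i hi
      have hpi := (Finset.mem_filter.mp hi).2
      exact mul_le_mul_of_nonneg_left (hle i hpi) (le_of_lt (mul_pos hpi (hU i)))
    · refine ⟨s0, by simp [hps0], ?_⟩
      exact mul_lt_mul_of_pos_left (lt_of_le_of_ne (hle s0 hps0) hne)
        (mul_pos hps0 (hU s0))

end
end InfluenceDiagram
end

section
/- Suppose Γ is a valid path big-M, p(s) ≥ 0 for all s ∈ S, and U(s) > 0 for all s ∈ S. If (x, z) is an element of the Decision Programming feasible set DP and there exist s, s' ∈ S^> whose restrictions to the observation set O agree (s_O = s'_O) but x(s) ≠ x(s'), then (x, z) is suboptimal: there exists x* such that (x*, z) is in DP and Σ_{s∈S^>} p(s)U(s)x*(s) > Σ_{s∈S^>} p(s)U(s)x(s). -/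
open Finset

namespace InfluenceDiagram

attribute [local instance] Classical.propDecidable

variable {ν : Type} [Fintype ν] [DecidableEq ν]

noncomputable section
variable (St : ν → Type) [∀ n, Fintype (St n)] [∀ n, DecidableEq (St n)] [∀ n, Nonempty (St n)]
  (D : Finset ν) (I : ν → Finset ν)

/-- a DP-feasible solution whose path variables disagree on two
positive-probability paths with the same observable segment is suboptimal. -/
theorem statement1 (p U : Path St → ℝ) (Γ z : ZAsg St D I) (x : Path St → ℝ)
    (hΓ : ValidPathBigM St D I p Γ)
    (hp : ∀ s : Path St, 0 ≤ p s) (hU : ∀ s : Path St, 0 < U s)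
    (hDP : DP St D I p Γ z x)
    (s s' : Path St) (hs : 0 < p s) (hs' : 0 < p s')
    (hO : ∀ n : obsSet D I, s n.1 = s' n.1) (hne : x s ≠ x s') :
    ∃ xstar : Path St → ℝ, DP St D I p Γ z xstar ∧
      DPobj St p U x < DPobj St p U xstar := by
  obtain ⟨hzstrat, hx01, hxcon⟩ := hDP
  -- an incompatible positive-probability path has x = 0
  have hzero : ∀ t : Path St, 0 < p t → ¬ PathCompat St D I z t → x t = 0 := by
    intro t hpt hnc
    simp only [PathCompat, not_forall] at hnc
    obtain ⟨d, hd, hzne⟩ := hnc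
    have hz0 : z d hd (t d) (fun n => t n.1) = 0 :=
      (hzstrat.1 d hd _ _).resolve_right hzne
    have hle := hxcon d hd (t d) (fun n => t n.1)
    rw [hz0, mul_zero] at hle
    have hmem : t ∈ univ.filter (fun u : Path St =>
        0 < p u ∧ u d = t d ∧ ∀ n : I d, u n.1 = t n.1) := by
      simp [hpt]
    have h1 : x t ≤ ∑ u ∈ univ.filter (fun u : Path St =>
        0 < p u ∧ u d = t d ∧ ∀ n : I d, u n.1 = t n.1), x u :=
      Finset.single_le_sum (fun u hu => (hx01 u (Finset.mem_filter.mp hu).2.1).1) hmem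
    have h2 := (hx01 t hpt).1
    linarith
  -- s and s' have the same compatibility status
  have hcompiff : PathCompat St D I z s ↔ PathCompat St D I z s' := by
    constructor <;> intro h d hd
    · have hsd := hO ⟨d, mem_obsSet_of_mem_D D I hd⟩
      have hsI : (fun n : I d => s' n.1) = fun n : I d => s n.1 := by
        funext n; exact (hO ⟨n.1, mem_obsSet_of_mem_I D I hd n.2⟩).symm
      rw [← hsd, hsI]; exact h d hd
    · have hsd := hO ⟨d, mem_obsSet_of_mem_D D I hd⟩
      have hsI : (fun n : I d => s n.1) = fun n : I d => s' n.1 := by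
        funext n; exact hO ⟨n.1, mem_obsSet_of_mem_I D I hd n.2⟩
      rw [hsd, hsI]; exact h d hd
  have hcomp : PathCompat St D I z s := by
    by_contra h
    exact hne ((hzero s hs h).trans (hzero s' hs' (fun hc => h (hcompiff.mpr hc))).symm)
  have hcomp' : PathCompat St D I z s' := hcompiff.mp hcomp
  set xstar : Path St → ℝ :=
    fun t => if 0 < p t ∧ PathCompat St D I z t then (1 : ℝ) else 0 with hxstar
  refine ⟨xstar, ⟨hzstrat, ?_, ?_⟩, ?_⟩
  · intro t _
    by_cases h : 0 < p t ∧ PathCompat St D I z t <;> simp [hxstar, h]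
  · intro d hd sd sI
    rcases hzstrat.1 d hd sd sI with hz | hz
    · rw [hz, mul_zero]
      have : ∀ t ∈ univ.filter (fun t : Path St =>
          0 < p t ∧ t d = sd ∧ ∀ n : I d, t n.1 = sI n), xstar t = 0 := by
        intro t ht
        rw [Finset.mem_filter] at ht
        obtain ⟨-, hpt, htd, htI⟩ := ht
        by_cases hc : PathCompat St D I z t
        · exfalso
          have h1 := hc d hd
          have hIe : (fun n : I d => t n.1) = sI := funext htI
          rw [htd, hIe, hz] at h1
          norm_num at h1
        · simp [hxstar, hc]
      rw [Finset.sum_eq_zero this]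
    · rw [hz, mul_one]
      have key := hΓ z hzstrat d hd sd sI
      have heq : ∑ t ∈ univ.filter (fun t : Path St =>
            0 < p t ∧ t d = sd ∧ ∀ n : I d, t n.1 = sI n), xstar t
          = ((univ.filter (fun t : Path St =>
              PathCompat St D I z t ∧ 0 < p t ∧ t d = sd ∧
                ∀ n : I d, t n.1 = sI n)).card : ℝ) := by
        rw [Finset.card_eq_sum_ones]
        push_cast
        rw [Finset.sum_congr rfl (g := fun t =>
            if PathCompat St D I z t then (1 : ℝ) else 0)
          (fun t ht => by
            rw [Finset.mem_filter] at ht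
            by_cases hc : PathCompat St D I z t <;>
              simp [hxstar, hc, ht.2.1])]
        rw [← Finset.sum_filter]
        rw [Finset.filter_filter]
        congr 1
        apply Finset.filter_congr
        intro t _
        constructor
        · rintro ⟨⟨h1, h2, h3⟩, h4⟩; exact ⟨h4, h1, h2, h3⟩
        · rintro ⟨h4, h1, h2, h3⟩; exact ⟨⟨h1, h2, h3⟩, h4⟩
      rw [heq]
      exact key
  · unfold DPobj
    apply Finset.sum_lt_sum
    · intro t ht
      rw [Finset.mem_filter] at ht
      have hpt := ht.2
      by_cases hc : PathCompat St D I z t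
      · have : xstar t = 1 := by simp [hxstar, hpt, hc]
        rw [this]
        have hpU : 0 < p t * U t := mul_pos hpt (hU t)
        nlinarith [(hx01 t hpt).2]
      · rw [hzero t hpt hc]
        simp [hxstar, hc]
    · have hlt : x s < 1 ∨ x s' < 1 := by
        by_contra h
        push_neg at h
        have h1 : x s = 1 := le_antisymm (hx01 s hs).2 h.1
        have h2 : x s' = 1 := le_antisymm (hx01 s' hs').2 h.2
        exact hne (h1.trans h2.symm)
      rcases hlt with hlt | hlt
      · refine ⟨s, by simp [hs], ?_⟩
        have : xstar s = 1 := by simp [hxstar, hs, hcomp]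
        rw [this]
        have hpU : 0 < p s * U s := mul_pos hs (hU s)
        nlinarith
      · refine ⟨s', by simp [hs'], ?_⟩
        have : xstar s' = 1 := by simp [hxstar, hs', hcomp']
        rw [this]
        have hpU : 0 < p s' * U s' := mul_pos hs' (hU s')
        nlinarith

end
end InfluenceDiagram
end

section
/- Suppose Γ is a valid path big-M, p(s) ≥ 0 for all s ∈ S, and U(s) > 0 for all s ∈ S. If (x, z) is an element of the Decision Programming feasible set DP that maximizes the objective Σ_{s∈S^>} p(s)U(s)x(s) over DP, then x(s) ∈ {0,1} for every s ∈ S^>; in fact, x(s) = 1 if and only if s is z-compatible. -/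
open Finset

namespace InfluenceDiagram

attribute [local instance] Classical.propDecidable

variable {ν : Type} [Fintype ν] [DecidableEq ν]

noncomputable section
variable (St : ν → Type) [∀ n, Fintype (St n)] [∀ n, DecidableEq (St n)] [∀ n, Nonempty (St n)]
  (D : Finset ν) (I : ν → Finset ν)

/-- at an optimal DP-feasible solution the path variables are
binary; in fact `x(s) = 1` iff the path `s` is `z`-compatible. -/
theorem statement2 (p U : Path St → ℝ) (Γ z : ZAsg St D I) (x : Path St → ℝ)
    (hΓ : ValidPathBigM St D I p Γ)
    (hp : ∀ s : Path St, 0 ≤ p s) (hU : ∀ s : Path St, 0 < U s)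
    (hDP : DP St D I p Γ z x)
    (hopt : ∀ (x' : Path St → ℝ) (z' : ZAsg St D I),
      DP St D I p Γ z' x' → DPobj St p U x' ≤ DPobj St p U x) :
    ∀ s : Path St, 0 < p s →
      (x s = 0 ∨ x s = 1) ∧ (x s = 1 ↔ PathCompat St D I z s) := by
  classical
  obtain ⟨hz, hb, hc⟩ := hDP
  -- incompatible paths are forced to zero
  have hzero : ∀ s : Path St, 0 < p s → ¬ PathCompat St D I z s → x s = 0 := by
    intro s hs hnc
    simp only [PathCompat, not_forall] at hnc
    obtain ⟨d, hd, hne⟩ := hnc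
    have hz0 : z d hd (s d) (fun n => s n.1) = 0 := (hz.1 d hd _ _).resolve_right hne
    have hcon := hc d hd (s d) (fun n => s n.1)
    rw [hz0, mul_zero] at hcon
    have hmem : s ∈ univ.filter
        (fun s' : Path St => 0 < p s' ∧ s' d = s d ∧ ∀ n : I d, s' n.1 = s n.1) := by
      simp [hs]
    have hle : x s ≤ ∑ s' ∈ univ.filter
        (fun s' : Path St => 0 < p s' ∧ s' d = s d ∧ ∀ n : I d, s' n.1 = s n.1), x s' :=
      Finset.single_le_sum (fun s' hs' => (hb s' (Finset.mem_filter.mp hs').2.1).1) hmem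
    exact le_antisymm (le_trans hle hcon) (hb s hs).1
  set x' : Path St → ℝ := fun s => if PathCompat St D I z s then 1 else 0 with hx'
  have hfeas : DP St D I p Γ z x' := by
    refine ⟨hz, fun s _ => ?_, ?_⟩
    · by_cases h : PathCompat St D I z s <;> simp [hx', h]
    · intro d hd sd sI
      have key : ∑ s ∈ univ.filter
            (fun s : Path St => 0 < p s ∧ s d = sd ∧ ∀ n : I d, s n.1 = sI n), x' s
          = ((univ.filter (fun s : Path St => PathCompat St D I z s ∧ 0 < p s ∧ s d = sd ∧
              ∀ n : I d, s n.1 = sI n)).card : ℝ) := by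
        rw [hx']
        simp only [Finset.sum_boole, Finset.filter_filter]
        congr 2
        apply Finset.filter_congr
        intro s _
        tauto
      rcases hz.1 d hd sd sI with h0 | h1
      · rw [h0, mul_zero, key]
        have : (univ.filter (fun s : Path St => PathCompat St D I z s ∧ 0 < p s ∧ s d = sd ∧
            ∀ n : I d, s n.1 = sI n)) = ∅ := by
          apply Finset.filter_false_of_mem
          rintro s - ⟨hcomp, -, hsd, hsI⟩
          have h1 := hcomp d hd
          rw [show (fun n : I d => s n.1) = sI from funext hsI, hsd, h0] at h1
          exact one_ne_zero h1.symm
        rw [this]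
        simp
      · rw [h1, mul_one, key]
        exact hΓ z hz d hd sd sI
  have hterms : ∀ s ∈ univ.filter (fun s : Path St => 0 < p s),
      p s * U s * x s ≤ p s * U s * x' s := by
    intro s hs
    have hps := (Finset.mem_filter.mp hs).2
    by_cases h : PathCompat St D I z s
    · have : x s ≤ 1 := (hb s hps).2
      have hpu : 0 ≤ p s * U s := le_of_lt (mul_pos hps (hU s))
      simp only [hx', h, if_true]
      exact mul_le_mul_of_nonneg_left this hpu
    · simp [hx', h, hzero s hps h]
  have heq : DPobj St p U x = DPobj St p U x' :=
    le_antisymm (Finset.sum_le_sum hterms) (hopt x' z hfeas)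
  have hterm := (Finset.sum_eq_sum_iff_of_le hterms).mp heq
  intro s hs
  by_cases hcomp : PathCompat St D I z s
  · have h1 : p s * U s * x s = p s * U s * x' s :=
      hterm s (Finset.mem_filter.mpr ⟨Finset.mem_univ s, hs⟩)
    simp only [hx', hcomp, if_true] at h1
    have hx1 : x s = 1 := by
      have hne : p s * U s ≠ 0 := ne_of_gt (mul_pos hs (hU s))
      exact mul_left_cancel₀ hne (by rw [mul_one]; linarith [h1])
    exact ⟨Or.inr hx1, ⟨fun _ => hcomp, fun _ => hx1⟩⟩
  · have h0 := hzero s hs hcomp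
    refine ⟨Or.inl h0, ⟨fun h1 => ?_, fun hc' => absurd hc' hcomp⟩⟩
    rw [h0] at h1
    exact absurd h1.symm one_ne_zero

end
end InfluenceDiagram
end

section
/- Suppose Γ is a valid path big-M. Let (y, z) be such that z is a strategy, y satisfies the reformulated linking constraints Σ_{s_O∈E_O(s_d, s_{I(d)})} y(s_O) ≤ Γ(s_d | s_{I(d)}) · z(s_d | s_{I(d)}) for all d ∈ D, s_d ∈ S_d, s_{I(d)} ∈ S_{I(d)}, and y(s_O) ∈ {0,1} for all s_O ∈ S_O. Define x : S^> → ℝ by x(s) = y(s_O), where s_O is the restriction of s to O. Then (x, z) is an element of the Decision Programming feasible set DP. -/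
open Finset

namespace InfluenceDiagram

attribute [local instance] Classical.propDecidable

variable {ν : Type} [Fintype ν] [DecidableEq ν]

noncomputable section
variable (St : ν → Type) [∀ n, Fintype (St n)] [∀ n, DecidableEq (St n)] [∀ n, Nonempty (St n)]
  (D : Finset ν) (I : ν → Finset ν)

/-- Proposition 3: if `z` is a strategy, `y` is binary and
satisfies the reformulated linking constraints with a valid path big-M `Γ`, then
`x(s) := y(s_O)` together with `z` is DP-feasible. -/
theorem statement4 (p : Path St → ℝ) (Γ z : ZAsg St D I)
    (hΓ : ValidPathBigM St D I p Γ)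
    (hz : Strategy St D I z)
    (y : OSeg St D I → ℝ)
    (hy : ∀ t : OSeg St D I, y t = 0 ∨ y t = 1)
    (hlink : ∀ (d : ν) (hd : d ∈ D) (sd : St d) (sI : Seg St (I d)),
      ∑ t ∈ univ.filter (fun t : OSeg St D I =>
          t ⟨d, mem_obsSet_of_mem_D D I hd⟩ = sd ∧
          ∀ n : I d, t ⟨n.1, mem_obsSet_of_mem_I D I hd n.2⟩ = sI n), y t
        ≤ Γ d hd sd sI * z d hd sd sI) :
    DP St D I p Γ z (fun s => y (fun n => s n.1)) := by
  have hy0 : ∀ t, 0 ≤ y t := fun t => by rcases hy t with h | h <;> simp [h]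
  have hy1 : ∀ t, y t ≤ 1 := fun t => by rcases hy t with h | h <;> simp [h]
  -- key: if y(s_O) = 1 then s is z-compatible
  have hcompat : ∀ s : Path St, y (fun n => s n.1) = 1 → PathCompat St D I z s := by
    intro s hs d hd
    rcases hz.1 d hd (s d) (fun n => s n.1) with h0 | h1
    · exfalso
      have hl := hlink d hd (s d) (fun n => s n.1)
      rw [h0, mul_zero] at hl
      have hmem : (fun n : obsSet D I => s n.1) ∈ univ.filter (fun t : OSeg St D I =>
          t ⟨d, mem_obsSet_of_mem_D D I hd⟩ = s d ∧
          ∀ n : I d, t ⟨n.1, mem_obsSet_of_mem_I D I hd n.2⟩ = s n.1) := by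
        simp
      have hle : y (fun n : obsSet D I => s n.1) ≤ 0 := by
        refine le_trans ?_ hl
        exact Finset.single_le_sum (fun t _ => hy0 t) hmem
      rw [hs] at hle; linarith
    · exact h1
  refine ⟨hz, fun s _ => ⟨hy0 _, hy1 _⟩, ?_⟩
  intro d hd sd sI
  rcases hz.1 d hd sd sI with h0 | h1
  · -- z = 0 : every relevant y is 0
    rw [h0, mul_zero]
    have hl := hlink d hd sd sI
    rw [h0, mul_zero] at hl
    have hall : ∀ t ∈ univ.filter (fun t : OSeg St D I =>
        t ⟨d, mem_obsSet_of_mem_D D I hd⟩ = sd ∧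
        ∀ n : I d, t ⟨n.1, mem_obsSet_of_mem_I D I hd n.2⟩ = sI n), y t = 0 := by
      intro t ht
      by_contra hne
      have : (0:ℝ) < ∑ t' ∈ _, y t' := Finset.sum_pos' (fun t' _ => hy0 t')
        ⟨t, ht, lt_of_le_of_ne (hy0 t) (Ne.symm hne)⟩
      linarith
    apply Finset.sum_nonpos
    intro s hs
    simp only [Finset.mem_filter, Finset.mem_univ, true_and] at hs
    have : y (fun n : obsSet D I => s n.1) = 0 := by
      apply hall
      simp only [Finset.mem_filter, Finset.mem_univ, true_and]
      exact ⟨hs.2.1, hs.2.2⟩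
    rw [this]
  · rw [h1, mul_one]
    have hΓ' := hΓ z hz d hd sd sI
    refine le_trans ?_ hΓ'
    have hle : ∀ s ∈ univ.filter (fun s : Path St =>
        0 < p s ∧ s d = sd ∧ ∀ n : I d, s n.1 = sI n),
        y (fun n : obsSet D I => s n.1) ≤ if PathCompat St D I z s then 1 else 0 := by
      intro s _
      rcases hy (fun n : obsSet D I => s n.1) with h | h
      · rw [h]; split <;> norm_num
      · rw [h, if_pos (hcompat s h)]
    calc ∑ s ∈ univ.filter (fun s : Path St =>
            0 < p s ∧ s d = sd ∧ ∀ n : I d, s n.1 = sI n), y (fun n : obsSet D I => s n.1)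
        ≤ ∑ s ∈ univ.filter (fun s : Path St =>
            0 < p s ∧ s d = sd ∧ ∀ n : I d, s n.1 = sI n),
            (if PathCompat St D I z s then (1:ℝ) else 0) := Finset.sum_le_sum hle
      _ = ((univ.filter (fun s : Path St => PathCompat St D I z s ∧ 0 < p s ∧ s d = sd ∧
            ∀ n : I d, s n.1 = sI n)).card : ℝ) := by
          rw [Finset.sum_ite, Finset.sum_const_zero, add_zero, Finset.filter_filter]
          simp only [Finset.sum_const, nsmul_eq_mul, mul_one]
          congr 2
          ext s
          simp only [Finset.mem_filter, Finset.mem_univ, true_and]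
          tauto

end
end InfluenceDiagram
end

section
/- Suppose Γ is a valid path big-M, p(s) ≥ 0 for all s ∈ S, and U(s) > 0 for all s ∈ S. Let (y*, z*) be an element of the reformulated feasible set RDP with y*(s_O) ∈ {0,1} for all s_O ∈ S_O, and assume (y*, z*) maximizes Σ_{s_O∈S_O} 𝔼_U(s_O) y(s_O) over RDP. Define x* : S^> → ℝ by x*(s) = y*(s_O), where s_O is the restriction of s to O. Then (x*, z*) is an element of the Decision Programming feasible set DP and maximizes Σ_{s∈S^>} p(s)U(s)x(s) over DP. -/
open Finset

namespace InfluenceDiagram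

attribute [local instance] Classical.propDecidable

variable {ν : Type} [Fintype ν] [DecidableEq ν]

noncomputable section
variable (St : ν → Type) [∀ n, Fintype (St n)] [∀ n, DecidableEq (St n)] [∀ n, Nonempty (St n)]
  (D : Finset ν) (I : ν → Finset ν)

lemma res_pred (t : OSeg St D I) :
    (fun s : Path St => ∀ n : obsSet D I, s n.1 = t n)
      = (fun s : Path St => (fun n : obsSet D I => s n.1) = t) := by
  funext s
  exact propext ⟨fun h => funext h, fun h n => congrFun h n⟩

lemma segCompat_lambda (z : ZAsg St D I) (s : Path St) :
    SegCompat St D I z (fun n : obsSet D I => s n.1) ↔ PathCompat St D I z s := Iff.rfl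

lemma y_zero_of_not_segCompat (Γ z : ZAsg St D I) (y : OSeg St D I → ℝ)
    (h : RDP St D I Γ z y) (t : OSeg St D I) (ht : ¬ SegCompat St D I z t) : y t = 0 := by
  obtain ⟨hz, hy, hc⟩ := h
  rw [SegCompat] at ht
  push_neg at ht
  obtain ⟨d, hd, hne⟩ := ht
  have h0 : z d hd (t ⟨d, mem_obsSet_of_mem_D D I hd⟩)
      (fun n => t ⟨n.1, mem_obsSet_of_mem_I D I hd n.2⟩) = 0 := by
    rcases hz.1 d hd (t ⟨d, mem_obsSet_of_mem_D D I hd⟩)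
      (fun n => t ⟨n.1, mem_obsSet_of_mem_I D I hd n.2⟩) with h | h
    · exact h
    · exact absurd h hne
  have hkey := hc d hd (t ⟨d, mem_obsSet_of_mem_D D I hd⟩)
      (fun n => t ⟨n.1, mem_obsSet_of_mem_I D I hd n.2⟩)
  rw [h0, mul_zero] at hkey
  have hmem : t ∈ univ.filter (fun t' : OSeg St D I =>
      t' ⟨d, mem_obsSet_of_mem_D D I hd⟩ = t ⟨d, mem_obsSet_of_mem_D D I hd⟩ ∧
      ∀ n : I d, t' ⟨n.1, mem_obsSet_of_mem_I D I hd n.2⟩ =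
        t ⟨n.1, mem_obsSet_of_mem_I D I hd n.2⟩) := by
    simp
  have hle := Finset.single_le_sum (f := y) (fun i _ => (hy i).1) hmem
  linarith [(hy t).1]

lemma x_zero_of_not_pathCompat (p : Path St → ℝ) (Γ z : ZAsg St D I) (x : Path St → ℝ)
    (h : DP St D I p Γ z x) (s : Path St) (hps : 0 < p s)
    (hs : ¬ PathCompat St D I z s) : x s = 0 := by
  obtain ⟨hz, hx, hc⟩ := h
  rw [PathCompat] at hs
  push_neg at hs
  obtain ⟨d, hd, hne⟩ := hs
  have h0 : z d hd (s d) (fun n : I d => s n.1) = 0 := by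
    rcases hz.1 d hd (s d) (fun n : I d => s n.1) with h | h
    · exact h
    · exact absurd h hne
  have hkey := hc d hd (s d) (fun n : I d => s n.1)
  rw [h0, mul_zero] at hkey
  have hmem : s ∈ univ.filter (fun s' : Path St =>
      0 < p s' ∧ s' d = s d ∧ ∀ n : I d, s' n.1 = s n.1) := by
    simp [hps]
  have hle := Finset.single_le_sum (f := x)
    (fun i hi => (hx i (Finset.mem_filter.mp hi).2.1).1) hmem
  linarith [(hx s hps).1]

lemma RDPobj_eq (p U : Path St → ℝ) (y : OSeg St D I → ℝ) :
    RDPobj St D I p U y = ∑ s : Path St, p s * U s * y (fun n : obsSet D I => s n.1) := by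
  rw [RDPobj]
  have key : ∀ t : OSeg St D I, segEU St D I p U t * y t =
      ∑ s ∈ univ.filter (fun s : Path St => (fun n : obsSet D I => s n.1) = t),
        p s * U s * y (fun n : obsSet D I => s n.1) := by
    intro t
    have hset : univ.filter (fun s : Path St => ∀ n : obsSet D I, s n.1 = t n)
        = univ.filter (fun s : Path St => (fun n : obsSet D I => s n.1) = t) :=
      Finset.filter_congr fun s _ => ⟨fun h => funext h, fun h n => congrFun h n⟩
    rw [segEU, hset, Finset.sum_mul]
    refine Finset.sum_congr rfl fun s hs => ?_
    rw [(Finset.mem_filter.mp hs).2]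
  rw [Finset.sum_congr rfl fun t _ => key t]
  exact Finset.sum_fiberwise_of_maps_to (fun s _ => Finset.mem_univ _) _

/-- Proposition 4: if `(y*, z*)` is a binary optimal solution of
the reformulation, then `x*(s) := y*(s_O)` together with `z*` is an optimal
solution of the original Decision Programming model. -/
theorem statement5 (p U : Path St → ℝ) (Γ zstar : ZAsg St D I)
    (ystar : OSeg St D I → ℝ)
    (hΓ : ValidPathBigM St D I p Γ)
    (hp : ∀ s : Path St, 0 ≤ p s) (hU : ∀ s : Path St, 0 < U s)
    (hRDP : RDP St D I Γ zstar ystar)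
    (hbin : ∀ t : OSeg St D I, ystar t = 0 ∨ ystar t = 1)
    (hopt : ∀ (y : OSeg St D I → ℝ) (z : ZAsg St D I),
      RDP St D I Γ z y → RDPobj St D I p U y ≤ RDPobj St D I p U ystar) :
    DP St D I p Γ zstar (fun s => ystar (fun n => s n.1)) ∧
      ∀ (x : Path St → ℝ) (z : ZAsg St D I), DP St D I p Γ z x →
        DPobj St p U x ≤ DPobj St p U (fun s => ystar (fun n => s n.1)) := by
  have hzstar := hRDP.1
  have hy := hRDP.2.1
  have hDPstar : DP St D I p Γ zstar (fun s => ystar (fun n => s n.1)) := by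
    refine ⟨hzstar, fun s _ => hy _, ?_⟩
    intro d hd sd sI
    rcases hzstar.1 d hd sd sI with h0 | h1
    · rw [h0, mul_zero]
      apply le_of_eq
      apply Finset.sum_eq_zero
      intro s hs
      simp only [Finset.mem_filter, Finset.mem_univ, true_and] at hs
      obtain ⟨hps, hsd, hsI⟩ := hs
      refine y_zero_of_not_segCompat St D I Γ zstar ystar hRDP
        (fun n : obsSet D I => s n.1) (fun hcompat => ?_)
      have hc := (segCompat_lambda St D I zstar s).mp hcompat d hd
      have hfun : (fun n : I d => s n.1) = sI := funext fun n => hsI n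
      rw [hsd, hfun, h0] at hc
      exact zero_ne_one hc
    · rw [h1, mul_one]
      calc ∑ s ∈ univ.filter (fun s : Path St =>
              0 < p s ∧ s d = sd ∧ ∀ n : I d, s n.1 = sI n),
            ystar (fun n : obsSet D I => s n.1)
          ≤ ∑ s ∈ univ.filter (fun s : Path St =>
              0 < p s ∧ s d = sd ∧ ∀ n : I d, s n.1 = sI n),
            (if PathCompat St D I zstar s then (1 : ℝ) else 0) := by
            apply Finset.sum_le_sum
            intro s _
            by_cases hcs : PathCompat St D I zstar s
            · rw [if_pos hcs]; exact (hy _).2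
            · rw [if_neg hcs]
              exact le_of_eq (y_zero_of_not_segCompat St D I Γ zstar ystar hRDP
                (fun n : obsSet D I => s n.1)
                (fun hcc => hcs ((segCompat_lambda St D I zstar s).mp hcc)))
        _ = (((univ.filter (fun s : Path St =>
              0 < p s ∧ s d = sd ∧ ∀ n : I d, s n.1 = sI n)).filter
                (fun s => PathCompat St D I zstar s)).card : ℝ) := by
            rw [Finset.sum_boole]
        _ = ((univ.filter (fun s : Path St => PathCompat St D I zstar s ∧
              0 < p s ∧ s d = sd ∧ ∀ n : I d, s n.1 = sI n)).card : ℝ) := by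
            have hfe : (univ.filter (fun s : Path St =>
                0 < p s ∧ s d = sd ∧ ∀ n : I d, s n.1 = sI n)).filter
                  (fun s => PathCompat St D I zstar s)
                = univ.filter (fun s : Path St => PathCompat St D I zstar s ∧
                    0 < p s ∧ s d = sd ∧ ∀ n : I d, s n.1 = sI n) := by
              ext s
              simp only [Finset.mem_filter, Finset.mem_univ, true_and]
              tauto
            rw [hfe]
        _ ≤ Γ d hd sd sI := hΓ zstar hzstar d hd sd sI
  refine ⟨hDPstar, ?_⟩
  intro x z hxz
  set Q : OSeg St D I → Prop := fun t => SegCompat St D I z t ∧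
    ∃ s : Path St, (fun n : obsSet D I => s n.1) = t ∧ 0 < p s with hQ
  set y' : OSeg St D I → ℝ := fun t => if Q t then 1 else 0 with hy'
  have hy'01 : ∀ t, 0 ≤ y' t ∧ y' t ≤ 1 := by
    intro t; dsimp [y']; split <;> norm_num
  have hy'RDP : RDP St D I Γ z y' := by
    refine ⟨hxz.1, hy'01, ?_⟩
    intro d hd sd sI
    rcases hxz.1.1 d hd sd sI with h0 | h1
    · rw [h0, mul_zero]
      apply le_of_eq
      apply Finset.sum_eq_zero
      intro t ht
      simp only [Finset.mem_filter, Finset.mem_univ, true_and] at ht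
      dsimp [y']
      rw [if_neg]
      rintro ⟨hcomp, -⟩
      have hcc := hcomp d hd
      rw [ht.1, funext ht.2, h0] at hcc
      exact zero_ne_one hcc
    · rw [h1, mul_one]
      have hsum : ∑ t ∈ univ.filter (fun t : OSeg St D I =>
          t ⟨d, mem_obsSet_of_mem_D D I hd⟩ = sd ∧
          ∀ n : I d, t ⟨n.1, mem_obsSet_of_mem_I D I hd n.2⟩ = sI n), y' t
          = (((univ.filter (fun t : OSeg St D I =>
              t ⟨d, mem_obsSet_of_mem_D D I hd⟩ = sd ∧
              ∀ n : I d, t ⟨n.1, mem_obsSet_of_mem_I D I hd n.2⟩ = sI n)).filter Q).card : ℝ) := by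
        dsimp [y']
        rw [Finset.sum_boole]
      rw [hsum]
      have hcard : ((univ.filter (fun t : OSeg St D I =>
          t ⟨d, mem_obsSet_of_mem_D D I hd⟩ = sd ∧
          ∀ n : I d, t ⟨n.1, mem_obsSet_of_mem_I D I hd n.2⟩ = sI n)).filter Q).card
          ≤ (univ.filter (fun s : Path St => PathCompat St D I z s ∧
              0 < p s ∧ s d = sd ∧ ∀ n : I d, s n.1 = sI n)).card := by
        have hne : Nonempty (Path St) := inferInstance
        set pick : OSeg St D I → Path St := fun t =>
          if h : ∃ s : Path St, (fun n : obsSet D I => s n.1) = t ∧ 0 < p s then h.choose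
          else Classical.arbitrary _ with hpick
        apply Finset.card_le_card_of_injOn pick
        · intro t ht
          rw [Finset.mem_coe] at ht ⊢
          simp only [Finset.mem_filter, Finset.mem_univ, true_and] at ht
          obtain ⟨⟨htd, htI⟩, hcomp, hex⟩ := ht
          have hspec : (fun n : obsSet D I => hex.choose n.1) = t ∧ 0 < p hex.choose :=
            hex.choose_spec
          have hpt : pick t = hex.choose := by dsimp [pick]; rw [dif_pos hex]
          simp only [Finset.mem_filter, Finset.mem_univ, true_and]
          rw [hpt]
          refine ⟨?_, hspec.2, ?_, ?_⟩
          · have : SegCompat St D I z (fun n : obsSet D I => hex.choose n.1) := by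
              rw [hspec.1]; exact hcomp
            exact (segCompat_lambda St D I z hex.choose).mp this
          · exact (congrFun hspec.1 ⟨d, mem_obsSet_of_mem_D D I hd⟩).trans htd
          · exact fun n =>
              (congrFun hspec.1 ⟨n.1, mem_obsSet_of_mem_I D I hd n.2⟩).trans (htI n)
        · intro t1 ht1 t2 ht2 heq
          simp only [Finset.coe_filter, Set.mem_setOf_eq, Finset.mem_univ, true_and] at ht1 ht2
          have h1 : (fun n : obsSet D I => ht1.2.2.choose n.1) = t1 ∧ 0 < p ht1.2.2.choose :=
            ht1.2.2.choose_spec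
          have h2 : (fun n : obsSet D I => ht2.2.2.choose n.1) = t2 ∧ 0 < p ht2.2.2.choose :=
            ht2.2.2.choose_spec
          have e1 : pick t1 = ht1.2.2.choose := by dsimp [pick]; rw [dif_pos ht1.2.2]
          have e2 : pick t2 = ht2.2.2.choose := by dsimp [pick]; rw [dif_pos ht2.2.2]
          rw [e1, e2] at heq
          rw [← h1.1, ← h2.1, heq]
      calc (((univ.filter (fun t : OSeg St D I =>
              t ⟨d, mem_obsSet_of_mem_D D I hd⟩ = sd ∧
              ∀ n : I d, t ⟨n.1, mem_obsSet_of_mem_I D I hd n.2⟩ = sI n)).filter Q).card : ℝ)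
          ≤ ((univ.filter (fun s : Path St => PathCompat St D I z s ∧
              0 < p s ∧ s d = sd ∧ ∀ n : I d, s n.1 = sI n)).card : ℝ) := Nat.cast_le.mpr hcard
        _ ≤ Γ d hd sd sI := hΓ z hxz.1 d hd sd sI
  have hobj1 : DPobj St p U x ≤ RDPobj St D I p U y' := by
    rw [RDPobj_eq]
    have step1 : DPobj St p U x
        ≤ ∑ s ∈ univ.filter (fun s : Path St => 0 < p s),
            p s * U s * y' (fun n : obsSet D I => s n.1) := by
      rw [DPobj]
      apply Finset.sum_le_sum
      intro s hs
      have hps : 0 < p s := by simpa using hs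
      have hpu : 0 ≤ p s * U s := mul_nonneg (hp s) (hU s).le
      by_cases hc : PathCompat St D I z s
      · have hy1 : y' (fun n : obsSet D I => s n.1) = 1 := by
          dsimp [y']
          rw [if_pos ⟨(segCompat_lambda St D I z s).mpr hc, s, rfl, hps⟩]
        rw [hy1, mul_one]
        exact (mul_le_mul_of_nonneg_left (hxz.2.1 s hps).2 hpu).trans_eq (mul_one _)
      · rw [x_zero_of_not_pathCompat St D I p Γ z x hxz s hps hc, mul_zero]
        exact mul_nonneg hpu (hy'01 _).1
    refine step1.trans ?_
    refine Finset.sum_le_sum_of_subset_of_nonneg (Finset.filter_subset _ _) ?_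
    intro s _ _
    exact mul_nonneg (mul_nonneg (hp s) (hU s).le) (hy'01 _).1
  have hobj3 : RDPobj St D I p U ystar = DPobj St p U (fun s => ystar (fun n => s n.1)) := by
    rw [RDPobj_eq]
    simp only [DPobj]
    symm
    apply Finset.sum_filter_of_ne
    intro s _ hne
    by_contra hps
    have hp0 : p s = 0 := le_antisymm (not_lt.mp hps) (hp s)
    rw [hp0] at hne
    simp at hne
  calc DPobj St p U x ≤ RDPobj St D I p U y' := hobj1
    _ ≤ RDPobj St D I p U ystar := hopt y' z hy'RDP
    _ = DPobj St p U (fun s => ystar (fun n => s n.1)) := hobj3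

end
end InfluenceDiagram
end

section
/- Suppose Γ is both a valid path big-M and a valid segment big-M, p(s) ≥ 0 for all s ∈ S, and U(s) > 0 for all s ∈ S. Then the supremum of Σ_{s∈S^>} p(s)U(s)x(s) over all (x, z) in the Decision Programming feasible set DP equals the supremum of Σ_{s_O∈S_O} 𝔼_U(s_O) y(s_O) over all (y, z) in the reformulated feasible set RDP. -/
open Finset

namespace InfluenceDiagram

attribute [local instance] Classical.propDecidable

variable {ν : Type} [Fintype ν] [DecidableEq ν]

noncomputable section
variable (St : ν → Type) [∀ n, Fintype (St n)] [∀ n, DecidableEq (St n)] [∀ n, Nonempty (St n)]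
  (D : Finset ν) (I : ν → Finset ν)

/-- Restriction of a path to the observation set. -/
def restrO (s : Path St) : OSeg St D I := fun n => s n.1

lemma pathCompat_iff_segCompat (z : ZAsg St D I) (s : Path St) :
    PathCompat St D I z s ↔ SegCompat St D I z (restrO St D I s) := Iff.rfl

/-- Value of a strategy, path formulation. -/
def Vval (p U : Path St → ℝ) (z : ZAsg St D I) : ℝ :=
  ∑ s ∈ univ.filter (fun s : Path St => 0 < p s ∧ PathCompat St D I z s), p s * U s

/-- Value of a strategy, segment formulation. -/
def Wval (p U : Path St → ℝ) (z : ZAsg St D I) : ℝ :=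
  ∑ t ∈ univ.filter (fun t => SegCompat St D I z t), segEU St D I p U t

lemma segEU_nonneg (p U : Path St → ℝ) (hp : ∀ s, 0 ≤ p s) (hU : ∀ s, 0 < U s)
    (t : OSeg St D I) : 0 ≤ segEU St D I p U t :=
  Finset.sum_nonneg fun s _ => mul_nonneg (hp s) (hU s).le

lemma x_eq_zero_of_not_compat {p : Path St → ℝ} {Γ z : ZAsg St D I} {x : Path St → ℝ}
    (hDP : DP St D I p Γ z x) {s : Path St} (hps : 0 < p s)
    (hnc : ¬ PathCompat St D I z s) : x s = 0 := by
  rw [PathCompat] at hnc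
  push_neg at hnc
  obtain ⟨d, hd, hne⟩ := hnc
  have hz0 : z d hd (s d) (fun n => s n.1) = 0 :=
    ((hDP.1.1 d hd (s d) (fun n => s n.1)).resolve_right hne)
  have hkey := hDP.2.2 d hd (s d) (fun n => s n.1)
  rw [hz0, mul_zero] at hkey
  have hmem : s ∈ univ.filter (fun s' : Path St =>
      0 < p s' ∧ s' d = s d ∧ ∀ n : I d, s' n.1 = (fun n : I d => s n.1) n) :=
    Finset.mem_filter.mpr ⟨Finset.mem_univ _, hps, rfl, fun n => rfl⟩
  have hle : x s ≤ ∑ s' ∈ univ.filter (fun s' : Path St =>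
      0 < p s' ∧ s' d = s d ∧ ∀ n : I d, s' n.1 = (fun n : I d => s n.1) n), x s' :=
    Finset.single_le_sum (fun i hi => (hDP.2.1 i (Finset.mem_filter.mp hi).2.1).1) hmem
  exact le_antisymm (hle.trans hkey) (hDP.2.1 s hps).1

lemma dpobj_le_Vval {p U : Path St → ℝ} {Γ z : ZAsg St D I} {x : Path St → ℝ}
    (hDP : DP St D I p Γ z x) (hU : ∀ s, 0 < U s) :
    DPobj St p U x ≤ Vval St D I p U z := by
  rw [DPobj, Vval]
  have h1 : ∀ s ∈ univ.filter (fun s : Path St => 0 < p s),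
      p s * U s * x s ≤ (if PathCompat St D I z s then p s * U s else 0) := by
    intro s hs
    have hps : 0 < p s := (Finset.mem_filter.mp hs).2
    by_cases hc : PathCompat St D I z s
    · rw [if_pos hc]
      have := mul_le_of_le_one_right (mul_nonneg hps.le (hU s).le) (hDP.2.1 s hps).2
      exact this
    · rw [if_neg hc, x_eq_zero_of_not_compat St D I hDP hps hc, mul_zero]
  calc ∑ s ∈ univ.filter (fun s : Path St => 0 < p s), p s * U s * x s
      ≤ ∑ s ∈ univ.filter (fun s : Path St => 0 < p s),
          (if PathCompat St D I z s then p s * U s else 0) := Finset.sum_le_sum h1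
    _ = ∑ s ∈ (univ.filter (fun s : Path St => 0 < p s)).filter
          (fun s => PathCompat St D I z s), p s * U s := (Finset.sum_filter _ _).symm
    _ = _ := by rw [Finset.filter_filter]

lemma xz_feasible {p : Path St → ℝ} {Γ : ZAsg St D I}
    (hΓpath : ValidPathBigM St D I p Γ) {z : ZAsg St D I} (hz : Strategy St D I z) :
    DP St D I p Γ z (fun s => if PathCompat St D I z s then (1 : ℝ) else 0) := by
  refine ⟨hz, fun s _ => ?_, fun d hd sd sI => ?_⟩
  · by_cases hc : PathCompat St D I z s <;> simp [hc]
  · rw [Finset.sum_boole, Finset.filter_filter]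
    rcases hz.1 d hd sd sI with h0 | h1
    · rw [h0, mul_zero]
      have hempty : (univ.filter (fun s : Path St =>
          (0 < p s ∧ s d = sd ∧ ∀ n : I d, s n.1 = sI n) ∧ PathCompat St D I z s)) = ∅ := by
        rw [Finset.filter_eq_empty_iff]
        rintro s _ ⟨⟨_, hsd, hsI⟩, hc⟩
        have := hc d hd
        rw [show (fun n : I d => s n.1) = sI from funext hsI, hsd, h0] at this
        exact one_ne_zero this.symm
      rw [hempty]
      simp
    · rw [h1, mul_one]
      have hset : (univ.filter (fun s : Path St =>
          (0 < p s ∧ s d = sd ∧ ∀ n : I d, s n.1 = sI n) ∧ PathCompat St D I z s))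
          = (univ.filter (fun s : Path St =>
            PathCompat St D I z s ∧ 0 < p s ∧ s d = sd ∧ ∀ n : I d, s n.1 = sI n)) := by
        ext s; simp only [Finset.mem_filter]; tauto
      rw [hset]
      exact hΓpath z hz d hd sd sI

lemma dpobj_xz {p U : Path St → ℝ} (z : ZAsg St D I) :
    DPobj St p U (fun s => if PathCompat St D I z s then (1 : ℝ) else 0)
      = Vval St D I p U z := by
  rw [DPobj, Vval]
  have : ∀ s : Path St, p s * U s * (if PathCompat St D I z s then (1:ℝ) else 0)
      = (if PathCompat St D I z s then p s * U s else 0) := by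
    intro s; by_cases hc : PathCompat St D I z s <;> simp [hc]
  rw [Finset.sum_congr rfl fun s _ => this s, ← Finset.sum_filter, Finset.filter_filter]

lemma y_eq_zero_of_not_compat {Γ z : ZAsg St D I} {y : OSeg St D I → ℝ}
    (hR : RDP St D I Γ z y) {t : OSeg St D I}
    (hnc : ¬ SegCompat St D I z t) : y t = 0 := by
  rw [SegCompat] at hnc
  push_neg at hnc
  obtain ⟨d, hd, hne⟩ := hnc
  set sd := t ⟨d, mem_obsSet_of_mem_D D I hd⟩
  set sI : Seg St (I d) := fun n => t ⟨n.1, mem_obsSet_of_mem_I D I hd n.2⟩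
  have hz0 : z d hd sd sI = 0 := (hR.1.1 d hd sd sI).resolve_right hne
  have hkey := hR.2.2 d hd sd sI
  rw [hz0, mul_zero] at hkey
  have hmem : t ∈ univ.filter (fun t' : OSeg St D I =>
      t' ⟨d, mem_obsSet_of_mem_D D I hd⟩ = sd ∧
      ∀ n : I d, t' ⟨n.1, mem_obsSet_of_mem_I D I hd n.2⟩ = sI n) :=
    Finset.mem_filter.mpr ⟨Finset.mem_univ _, rfl, fun n => rfl⟩
  have hle := Finset.single_le_sum (f := y) (fun i _ => (hR.2.1 i).1) hmem
  exact le_antisymm (hle.trans hkey) (hR.2.1 t).1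

lemma rdpobj_le_Wval {p U : Path St → ℝ} {Γ z : ZAsg St D I} {y : OSeg St D I → ℝ}
    (hR : RDP St D I Γ z y) (hp : ∀ s, 0 ≤ p s) (hU : ∀ s, 0 < U s) :
    RDPobj St D I p U y ≤ Wval St D I p U z := by
  rw [RDPobj, Wval]
  have h1 : ∀ t : OSeg St D I,
      segEU St D I p U t * y t ≤ (if SegCompat St D I z t then segEU St D I p U t else 0) := by
    intro t
    by_cases hc : SegCompat St D I z t
    · rw [if_pos hc]
      exact mul_le_of_le_one_right (segEU_nonneg St D I p U hp hU t) (hR.2.1 t).2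
    · rw [if_neg hc, y_eq_zero_of_not_compat St D I hR hc, mul_zero]
  calc ∑ t : OSeg St D I, segEU St D I p U t * y t
      ≤ ∑ t : OSeg St D I, (if SegCompat St D I z t then segEU St D I p U t else 0) :=
        Finset.sum_le_sum fun t _ => h1 t
    _ = _ := (Finset.sum_filter _ _).symm

lemma yz_feasible {Γ : ZAsg St D I}
    (hΓseg : ValidSegBigM St D I Γ) {z : ZAsg St D I} (hz : Strategy St D I z) :
    RDP St D I Γ z (fun t => if SegCompat St D I z t then (1 : ℝ) else 0) := by
  refine ⟨hz, fun t => ?_, fun d hd sd sI => ?_⟩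
  · by_cases hc : SegCompat St D I z t <;> simp [hc]
  · rw [Finset.sum_boole, Finset.filter_filter]
    rcases hz.1 d hd sd sI with h0 | h1
    · rw [h0, mul_zero]
      have hempty : (univ.filter (fun t : OSeg St D I =>
          (t ⟨d, mem_obsSet_of_mem_D D I hd⟩ = sd ∧
            ∀ n : I d, t ⟨n.1, mem_obsSet_of_mem_I D I hd n.2⟩ = sI n) ∧
          SegCompat St D I z t)) = ∅ := by
        rw [Finset.filter_eq_empty_iff]
        rintro t _ ⟨⟨hsd, hsI⟩, hc⟩
        have := hc d hd
        rw [show (fun n : I d => t ⟨n.1, mem_obsSet_of_mem_I D I hd n.2⟩) = sI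
            from funext hsI, hsd, h0] at this
        exact one_ne_zero this.symm
      rw [hempty]
      simp
    · rw [h1, mul_one]
      have hset : (univ.filter (fun t : OSeg St D I =>
          (t ⟨d, mem_obsSet_of_mem_D D I hd⟩ = sd ∧
            ∀ n : I d, t ⟨n.1, mem_obsSet_of_mem_I D I hd n.2⟩ = sI n) ∧
          SegCompat St D I z t))
          = (univ.filter (fun t : OSeg St D I =>
            SegCompat St D I z t ∧
            t ⟨d, mem_obsSet_of_mem_D D I hd⟩ = sd ∧
            ∀ n : I d, t ⟨n.1, mem_obsSet_of_mem_I D I hd n.2⟩ = sI n)) := by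
        ext t; simp only [Finset.mem_filter]; tauto
      rw [hset]
      exact hΓseg z hz d hd sd sI

lemma rdpobj_yz {p U : Path St → ℝ} (z : ZAsg St D I) :
    RDPobj St D I p U (fun t => if SegCompat St D I z t then (1 : ℝ) else 0)
      = Wval St D I p U z := by
  rw [RDPobj, Wval]
  have : ∀ t : OSeg St D I,
      segEU St D I p U t * (if SegCompat St D I z t then (1:ℝ) else 0)
        = (if SegCompat St D I z t then segEU St D I p U t else 0) := by
    intro t; by_cases hc : SegCompat St D I z t <;> simp [hc]
  rw [Finset.sum_congr rfl fun t _ => this t, ← Finset.sum_filter]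

lemma Vval_eq_Wval (p U : Path St → ℝ) (hp : ∀ s, 0 ≤ p s) (z : ZAsg St D I) :
    Vval St D I p U z = Wval St D I p U z := by
  have hfib : ∀ t : OSeg St D I,
      univ.filter (fun s : Path St => ∀ n : obsSet D I, s n.1 = t n)
        = univ.filter (fun s : Path St => restrO St D I s = t) := by
    intro t; ext s
    simp only [Finset.mem_filter, Finset.mem_univ, true_and, restrO, funext_iff]
  have hW : Wval St D I p U z
      = ∑ s ∈ univ.filter (fun s : Path St => PathCompat St D I z s), p s * U s := by
    rw [Wval]
    simp only [segEU]
    rw [Finset.sum_congr rfl fun t _ => by rw [hfib t]]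
    rw [Finset.sum_fiberwise_eq_sum_filter univ
      (univ.filter (fun t => SegCompat St D I z t)) (restrO St D I) (fun s => p s * U s)]
    apply Finset.sum_congr _ fun _ _ => rfl
    ext s
    simp only [Finset.mem_filter, Finset.mem_univ, true_and]
    exact (pathCompat_iff_segCompat St D I z s).symm
  rw [hW, Vval]
  apply Finset.sum_subset
  · intro s hs
    simp only [Finset.mem_filter] at hs ⊢
    exact ⟨hs.1, hs.2.2⟩
  · intro s hs hs2
    have hc : PathCompat St D I z s := (Finset.mem_filter.mp hs).2
    have hnp : ¬ (0 < p s) := fun h =>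
      hs2 (Finset.mem_filter.mpr ⟨Finset.mem_univ _, h, hc⟩)
    rw [le_antisymm (not_lt.mp hnp) (hp s), zero_mul]

/-- if `Γ` is both a valid path big-M and a valid segment big-M,
`p ≥ 0` and `U > 0`, the optimal values of the Decision Programming model and of
its reformulation coincide. -/
theorem statement6 (p U : Path St → ℝ) (Γ : ZAsg St D I)
    (hΓpath : ValidPathBigM St D I p Γ) (hΓseg : ValidSegBigM St D I Γ)
    (hp : ∀ s : Path St, 0 ≤ p s) (hU : ∀ s : Path St, 0 < U s) :
    sSup {r : ℝ | ∃ (x : Path St → ℝ) (z : ZAsg St D I),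
        DP St D I p Γ z x ∧ r = DPobj St p U x}
      = sSup {r : ℝ | ∃ (y : OSeg St D I → ℝ) (z : ZAsg St D I),
          RDP St D I Γ z y ∧ r = RDPobj St D I p U y} := by
  -- a default strategy
  set z₀ : ZAsg St D I := fun d _ sd _ => if sd = Classical.arbitrary (St d) then 1 else 0
    with hz₀def
  have hz₀ : Strategy St D I z₀ := by
    constructor
    · intro d hd sd sI
      by_cases h : sd = Classical.arbitrary (St d) <;> simp [hz₀def, h]
    · intro d hd sI
      simp [hz₀def, Finset.sum_ite_eq']
  set A := {r : ℝ | ∃ (x : Path St → ℝ) (z : ZAsg St D I),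
      DP St D I p Γ z x ∧ r = DPobj St p U x} with hA
  set B := {r : ℝ | ∃ (y : OSeg St D I → ℝ) (z : ZAsg St D I),
      RDP St D I Γ z y ∧ r = RDPobj St D I p U y} with hB
  have hAne : A.Nonempty :=
    ⟨_, _, z₀, xz_feasible St D I hΓpath hz₀, rfl⟩
  have hBne : B.Nonempty :=
    ⟨_, _, z₀, yz_feasible St D I hΓseg hz₀, rfl⟩
  have hAbdd : BddAbove A := by
    refine ⟨∑ s ∈ univ.filter (fun s : Path St => 0 < p s), p s * U s, ?_⟩
    rintro r ⟨x, z, hDP, rfl⟩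
    refine (dpobj_le_Vval St D I hDP hU).trans ?_
    apply Finset.sum_le_sum_of_subset_of_nonneg
    · intro s hs
      simp only [Finset.mem_filter] at hs ⊢
      exact ⟨hs.1, hs.2.1⟩
    · intro s hs _
      exact mul_nonneg (hp s) (hU s).le
  have hBbdd : BddAbove B := by
    refine ⟨∑ t : OSeg St D I, segEU St D I p U t, ?_⟩
    rintro r ⟨y, z, hR, rfl⟩
    refine (rdpobj_le_Wval St D I hR hp hU).trans ?_
    apply Finset.sum_le_sum_of_subset_of_nonneg (Finset.filter_subset _ _)
    intro t _ _
    exact segEU_nonneg St D I p U hp hU t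
  apply le_antisymm
  · apply csSup_le hAne
    rintro r ⟨x, z, hDP, rfl⟩
    have h1 : DPobj St p U x ≤ Wval St D I p U z :=
      (dpobj_le_Vval St D I hDP hU).trans (Vval_eq_Wval St D I p U hp z).le
    have h2 : Wval St D I p U z ∈ B :=
      ⟨_, z, yz_feasible St D I hΓseg hDP.1, (rdpobj_yz St D I z).symm⟩
    exact h1.trans (le_csSup hBbdd h2)
  · apply csSup_le hBne
    rintro r ⟨y, z, hR, rfl⟩
    have h1 : RDPobj St D I p U y ≤ Vval St D I p U z :=
      (rdpobj_le_Wval St D I hR hp hU).trans (Vval_eq_Wval St D I p U hp z).ge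
    have h2 : Vval St D I p U z ∈ A :=
      ⟨_, z, xz_feasible St D I hΓpath hR.1, (dpobj_xz St D I z).symm⟩
    exact h1.trans (le_csSup hAbdd h2)

end
end InfluenceDiagram
end

section
/- Assume the influence diagram is acyclic. If (y, z) is an element of the reformulated feasible set RDP, then for every segment s_{C_I} ∈ S_{C_I} := Π_{n∈C_I} S_n, the valid inequality Σ_{s_O∈E_O(s_{C_I})} y(s_O) ≤ 1 holds. -/
open Finset

namespace InfluenceDiagram

attribute [local instance] Classical.propDecidable

variable {ν : Type} [Fintype ν] [DecidableEq ν]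

noncomputable section
variable (St : ν → Type) [∀ n, Fintype (St n)] [∀ n, DecidableEq (St n)] [∀ n, Nonempty (St n)]
  (D : Finset ν) (I : ν → Finset ν)

/-- Proposition 5, valid inequality: for an acyclic influence
diagram, any RDP-feasible `(y, z)` satisfies
`Σ_{s_O ∈ E_O(s_{C_I})} y(s_O) ≤ 1` for every segment `s_{C_I}`. -/
theorem statement7 (Γ z : ZAsg St D I) (y : OSeg St D I → ℝ)
    (hacyc : Acyclic I) (hRDP : RDP St D I Γ z y)
    (t : Seg St (CIset D I)) :
    ∑ tO ∈ univ.filter (fun tO : OSeg St D I =>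
        ∀ n : CIset D I, tO ⟨n.1, mem_obsSet_of_mem_CI D I n.2⟩ = t n), y tO ≤ 1 := by
  obtain ⟨r, hr⟩ := hacyc
  obtain ⟨⟨hbin, hsum⟩, hy01, hcon⟩ := hRDP
  -- y vanishes on incompatible segments
  have hzero : ∀ tO : OSeg St D I, ¬ SegCompat St D I z tO → y tO = 0 := by
    intro tO hnc
    simp only [SegCompat, not_forall] at hnc
    obtain ⟨d, hd, hne⟩ := hnc
    have hz0 : z d hd (tO ⟨d, mem_obsSet_of_mem_D D I hd⟩)
        (fun n => tO ⟨n.1, mem_obsSet_of_mem_I D I hd n.2⟩) = 0 := by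
      rcases hbin d hd (tO ⟨d, mem_obsSet_of_mem_D D I hd⟩)
        (fun n => tO ⟨n.1, mem_obsSet_of_mem_I D I hd n.2⟩) with h | h
      · exact h
      · exact absurd h hne
    have hle := hcon d hd (tO ⟨d, mem_obsSet_of_mem_D D I hd⟩)
        (fun n => tO ⟨n.1, mem_obsSet_of_mem_I D I hd n.2⟩)
    rw [hz0, mul_zero] at hle
    have hmem : tO ∈ univ.filter (fun t' : OSeg St D I =>
        t' ⟨d, mem_obsSet_of_mem_D D I hd⟩ = tO ⟨d, mem_obsSet_of_mem_D D I hd⟩ ∧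
        ∀ n : I d, t' ⟨n.1, mem_obsSet_of_mem_I D I hd n.2⟩ =
          tO ⟨n.1, mem_obsSet_of_mem_I D I hd n.2⟩) :=
      Finset.mem_filter.mpr ⟨Finset.mem_univ _, rfl, fun n => rfl⟩
    have heq : ∑ t' ∈ univ.filter (fun t' : OSeg St D I =>
        t' ⟨d, mem_obsSet_of_mem_D D I hd⟩ = tO ⟨d, mem_obsSet_of_mem_D D I hd⟩ ∧
        ∀ n : I d, t' ⟨n.1, mem_obsSet_of_mem_I D I hd n.2⟩ =
          tO ⟨n.1, mem_obsSet_of_mem_I D I hd n.2⟩), y t' = 0 :=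
      le_antisymm hle (Finset.sum_nonneg fun t' _ => (hy01 t').1)
    exact (Finset.sum_eq_zero_iff_of_nonneg (fun t' _ => (hy01 t').1)).1 heq tO hmem
  -- a strategy selects a unique action
  have huniq : ∀ (d : ν) (hd : d ∈ D) (sI : Seg St (I d)) (a b : St d),
      z d hd a sI = 1 → z d hd b sI = 1 → a = b := by
    intro d hd sI a b ha hb
    by_contra hne
    have hsub := Finset.sum_le_sum_of_subset_of_nonneg
      (Finset.subset_univ ({a, b} : Finset (St d)))
      (fun x _ _ => show (0:ℝ) ≤ z d hd x sI by rcases hbin d hd x sI with h | h <;> simp [h])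
    rw [Finset.sum_pair hne, ha, hb, hsum d hd sI] at hsub
    linarith
  -- uniqueness of compatible extensions of t
  have hext : ∀ t1 t2 : OSeg St D I, SegCompat St D I z t1 → SegCompat St D I z t2 →
      (∀ n : CIset D I, t1 ⟨n.1, mem_obsSet_of_mem_CI D I n.2⟩ = t n) →
      (∀ n : CIset D I, t2 ⟨n.1, mem_obsSet_of_mem_CI D I n.2⟩ = t n) → t1 = t2 := by
    intro t1 t2 hc1 hc2 h1 h2
    have key : ∀ k, ∀ n : obsSet D I, r n.1 < k → t1 n = t2 n := by
      intro k
      induction k with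
      | zero => intro n h; omega
      | succ k ih =>
        intro n hn
        rcases Finset.mem_union.1 n.2 with hd | hci
        · have hsIeq : (fun m : I n.1 => t1 ⟨m.1, mem_obsSet_of_mem_I D I hd m.2⟩) =
              (fun m : I n.1 => t2 ⟨m.1, mem_obsSet_of_mem_I D I hd m.2⟩) :=
            funext fun m => ih ⟨m.1, mem_obsSet_of_mem_I D I hd m.2⟩
              (lt_of_lt_of_le (hr n.1 m.1 m.2) (Nat.lt_succ_iff.1 hn))
          have hz1 := hc1 n.1 hd
          have hz2 := hc2 n.1 hd
          exact huniq n.1 hd _ _ _ hz1 (hsIeq.symm ▸ hz2)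
        · exact (h1 ⟨n.1, hci⟩).trans (h2 ⟨n.1, hci⟩).symm
    funext n
    exact key (r n.1 + 1) n (Nat.lt_succ_self _)
  -- split the sum into compatible and incompatible parts
  set F := univ.filter (fun tO : OSeg St D I =>
      ∀ n : CIset D I, tO ⟨n.1, mem_obsSet_of_mem_CI D I n.2⟩ = t n) with hF
  rw [← Finset.sum_filter_add_sum_filter_not F (SegCompat St D I z) y]
  have hnot : ∑ tO ∈ F.filter (fun tO => ¬ SegCompat St D I z tO), y tO = 0 :=
    Finset.sum_eq_zero fun tO htO => hzero tO (Finset.mem_filter.1 htO).2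
  rw [hnot, add_zero]
  have hcard : (F.filter (SegCompat St D I z)).card ≤ 1 := by
    apply Finset.card_le_one.mpr
    intro a ha b hb
    obtain ⟨haF, hac⟩ := Finset.mem_filter.1 ha
    obtain ⟨hbF, hbc⟩ := Finset.mem_filter.1 hb
    exact hext a b hac hbc (Finset.mem_filter.1 haF).2 (Finset.mem_filter.1 hbF).2
  calc ∑ tO ∈ F.filter (SegCompat St D I z), y tO
      ≤ (F.filter (SegCompat St D I z)).card • (1 : ℝ) :=
        Finset.sum_le_card_nsmul _ _ _ (fun x _ => (hy01 x).2)
    _ = ((F.filter (SegCompat St D I z)).card : ℝ) := by simp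
    _ ≤ 1 := by exact_mod_cast hcard

end
end InfluenceDiagram
end

section
/- Assume the influence diagram is acyclic and let z be a strategy. If s_O and s'_O are two distinct elements of S_O whose restrictions to C_I agree, then at most one of s_O and s'_O is z-compatible. -/
open Finset

namespace InfluenceDiagram

attribute [local instance] Classical.propDecidable

variable {ν : Type} [Fintype ν] [DecidableEq ν]

noncomputable section
variable (St : ν → Type) [∀ n, Fintype (St n)] [∀ n, DecidableEq (St n)] [∀ n, Nonempty (St n)]
  (D : Finset ν) (I : ν → Finset ν)

/-- in an acyclic influence diagram, two distinct observable
segments whose restrictions to `C_I` agree cannot both be compatible with a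
strategy `z`. -/
theorem statement8 (z : ZAsg St D I) (hacyc : Acyclic I) (hz : Strategy St D I z)
    (t t' : OSeg St D I) (hne : t ≠ t')
    (hCI : ∀ n : CIset D I,
      t ⟨n.1, mem_obsSet_of_mem_CI D I n.2⟩ = t' ⟨n.1, mem_obsSet_of_mem_CI D I n.2⟩) :
    ¬(SegCompat St D I z t ∧ SegCompat St D I z t') := by
  rintro ⟨h1, h2⟩
  obtain ⟨r, hr⟩ := hacyc
  -- decision nodes where t and t' differ
  set bad : Finset ν :=
    D.filter (fun d => ∃ h : d ∈ obsSet D I, t ⟨d, h⟩ ≠ t' ⟨d, h⟩) with hbad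
  have hbadne : bad.Nonempty := by
    by_contra hempty
    apply hne
    funext n
    rcases Finset.mem_union.mp n.2 with hnD | hnCI
    · by_contra hne'
      exact hempty ⟨n.1, Finset.mem_filter.mpr ⟨hnD, n.2, by
        simpa using hne'⟩⟩
    · exact hCI ⟨n.1, hnCI⟩
  obtain ⟨d, hdbad, hdmin⟩ := Finset.exists_min_image bad r hbadne
  obtain ⟨hdD, hobs, hdiff⟩ := Finset.mem_filter.mp hdbad
  -- the information segments agree
  have hIeq : (fun n : I d => t ⟨n.1, mem_obsSet_of_mem_I D I hdD n.2⟩)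
      = (fun n : I d => t' ⟨n.1, mem_obsSet_of_mem_I D I hdD n.2⟩) := by
    funext n
    by_cases hnD : n.1 ∈ D
    · by_contra hne'
      have hnbad : n.1 ∈ bad :=
        Finset.mem_filter.mpr ⟨hnD, mem_obsSet_of_mem_I D I hdD n.2, hne'⟩
      exact absurd (hr d n.1 n.2) (not_lt.mpr (hdmin n.1 hnbad))
    · have hnCI : n.1 ∈ CIset D I :=
        Finset.mem_filter.mpr ⟨Finset.mem_compl.mpr hnD, ⟨d, hdD, n.2⟩⟩
      exact hCI ⟨n.1, hnCI⟩
  set sI : Seg St (I d) := fun n => t ⟨n.1, mem_obsSet_of_mem_I D I hdD n.2⟩ with hsI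
  set a := t ⟨d, mem_obsSet_of_mem_D D I hdD⟩ with ha
  set b := t' ⟨d, mem_obsSet_of_mem_D D I hdD⟩ with hb
  have hab : a ≠ b := hdiff
  have hza : z d hdD a sI = 1 := h1 d hdD
  have hzb : z d hdD b sI = 1 := by
    have := h2 d hdD
    rwa [← hIeq] at this
  -- contradiction with sum = 1
  have hsum : ∑ sd : St d, z d hdD sd sI = 1 := hz.2 d hdD sI
  have hnonneg : ∀ sd : St d, (0 : ℝ) ≤ z d hdD sd sI := by
    intro sd
    rcases hz.1 d hdD sd sI with h | h <;> rw [h] <;> norm_num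
  have h2le : (2 : ℝ) ≤ ∑ sd : St d, z d hdD sd sI := by
    have hsub : ({a, b} : Finset (St d)) ⊆ univ := Finset.subset_univ _
    have := Finset.sum_le_sum_of_subset_of_nonneg hsub
      (fun i _ _ => hnonneg i)
    calc (2 : ℝ) = ∑ sd ∈ ({a, b} : Finset (St d)), z d hdD sd sI := by
          rw [Finset.sum_pair hab, hza, hzb]; norm_num
      _ ≤ _ := this
  rw [hsum] at h2le
  norm_num at h2le

end
end InfluenceDiagram
end

section
/- Assume the influence diagram is acyclic. If (x, z) is an element of the Decision Programming feasible set DP, then for every full chance-node segment s_C ∈ S_C := Π_{c∈C} S_c, at most one z-compatible path extends s_C, and consequently Σ_{s∈E^>(s_C)} x(s) ≤ 1. -/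
open Finset

namespace InfluenceDiagram

attribute [local instance] Classical.propDecidable

variable {ν : Type} [Fintype ν] [DecidableEq ν]

noncomputable section
variable (St : ν → Type) [∀ n, Fintype (St n)] [∀ n, DecidableEq (St n)] [∀ n, Nonempty (St n)]
  (D : Finset ν) (I : ν → Finset ν)

/-- in an acyclic influence diagram, for any DP-feasible `(x, z)`
and any full chance-node segment `s_C`, at most one `z`-compatible path extends
`s_C`, and consequently `Σ_{s ∈ E^>(s_C)} x(s) ≤ 1`. -/
theorem statement9 (p : Path St → ℝ) (Γ z : ZAsg St D I) (x : Path St → ℝ)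
    (hacyc : Acyclic I) (hDP : DP St D I p Γ z x)
    (sC : Seg St Dᶜ) :
    (univ.filter (fun s : Path St =>
        PathCompat St D I z s ∧ ∀ n : (Dᶜ : Finset ν), s n.1 = sC n)).card ≤ 1 ∧
      ∑ s ∈ univ.filter (fun s : Path St =>
          0 < p s ∧ ∀ n : (Dᶜ : Finset ν), s n.1 = sC n), x s ≤ 1 := by
  obtain ⟨r, hr⟩ := hacyc
  obtain ⟨hstrat, hbound, hcons⟩ := hDP
  obtain ⟨hbin, hsum⟩ := hstrat
  -- uniqueness of compatible extension
  have uniq : ∀ s s' : Path St, PathCompat St D I z s → PathCompat St D I z s' →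
      (∀ n : (Dᶜ : Finset ν), s n.1 = sC n) → (∀ n : (Dᶜ : Finset ν), s' n.1 = sC n) →
      s = s' := by
    intro s s' hc hc' he he'
    have key : ∀ k, ∀ n : ν, r n < k → s n = s' n := by
      intro k
      induction k with
      | zero => intro n h; omega
      | succ k ih =>
        intro n hn
        by_cases hnD : n ∈ D
        · have hI : (fun m : (I n : Finset ν) => s m.1) = (fun m : (I n : Finset ν) => s' m.1) := by
            funext m
            exact ih m.1 (lt_of_lt_of_le (hr n m.1 m.2) (Nat.lt_succ_iff.mp hn))
          have h1 := hc n hnD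
          have h2 := hc' n hnD
          rw [hI] at h1
          by_contra hne
          have hone := hsum n hnD (fun m => s' m.1)
          have hge : (2 : ℝ) ≤ ∑ sd : St n, z n hnD sd (fun m => s' m.1) := by
            have hsub : ({s n, s' n} : Finset (St n)) ⊆ univ := subset_univ _
            have hnn : ∀ sd ∈ univ \ ({s n, s' n} : Finset (St n)),
                0 ≤ z n hnD sd (fun m => s' m.1) := by
              intro sd _
              rcases hbin n hnD sd (fun m => s' m.1) with h | h <;> rw [h] <;> norm_num
            calc (2 : ℝ) = ∑ sd ∈ ({s n, s' n} : Finset (St n)),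
                    z n hnD sd (fun m => s' m.1) := by
                  rw [Finset.sum_pair hne, h1, h2]; norm_num
              _ ≤ _ := Finset.sum_le_sum_of_subset_of_nonneg hsub
                  (fun sd _ h => hnn sd (Finset.mem_sdiff.mpr ⟨Finset.mem_univ _, h⟩))
          rw [hone] at hge; norm_num at hge
        · have := he ⟨n, Finset.mem_compl.mpr hnD⟩
          have := he' ⟨n, Finset.mem_compl.mpr hnD⟩
          simp_all
    funext n
    exact key (r n + 1) n (Nat.lt_succ_self _)
  have hcard : (univ.filter (fun s : Path St =>
      PathCompat St D I z s ∧ ∀ n : (Dᶜ : Finset ν), s n.1 = sC n)).card ≤ 1 := by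
    apply Finset.card_le_one.mpr
    intro a ha b hb
    simp only [Finset.mem_filter] at ha hb
    exact uniq a b ha.2.1 hb.2.1 ha.2.2 hb.2.2
  refine ⟨hcard, ?_⟩
  -- x vanishes on positive-probability non-compatible paths
  have hvan : ∀ s : Path St, 0 < p s → ¬ PathCompat St D I z s → x s = 0 := by
    intro s hp hnc
    simp only [PathCompat, not_forall] at hnc
    obtain ⟨d, hd, hz⟩ := hnc
    have hz0 : z d hd (s d) (fun n => s n.1) = 0 := by
      rcases hbin d hd (s d) (fun n => s n.1) with h | h
      · exact h
      · exact absurd h hz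
    have hcon := hcons d hd (s d) (fun n => s n.1)
    rw [hz0, mul_zero] at hcon
    have hmem : s ∈ univ.filter (fun s' : Path St =>
        0 < p s' ∧ s' d = s d ∧ ∀ n : (I d : Finset ν), s' n.1 = s n.1) := by
      simp [hp]
    have hnn : ∀ t ∈ univ.filter (fun s' : Path St =>
        0 < p s' ∧ s' d = s d ∧ ∀ n : (I d : Finset ν), s' n.1 = s n.1), 0 ≤ x t := by
      intro t ht
      simp only [Finset.mem_filter] at ht
      exact (hbound t ht.2.1).1
    have hle : x s ≤ ∑ t ∈ univ.filter (fun s' : Path St =>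
        0 < p s' ∧ s' d = s d ∧ ∀ n : (I d : Finset ν), s' n.1 = s n.1), x t :=
      Finset.single_le_sum hnn hmem
    have h0 : 0 ≤ x s := (hbound s hp).1
    linarith
  -- restrict the sum to compatible paths
  have hsum_eq : ∑ s ∈ univ.filter (fun s : Path St =>
        0 < p s ∧ ∀ n : (Dᶜ : Finset ν), s n.1 = sC n), x s
      = ∑ s ∈ (univ.filter (fun s : Path St =>
        0 < p s ∧ ∀ n : (Dᶜ : Finset ν), s n.1 = sC n)).filter
          (fun s => PathCompat St D I z s), x s := by
    apply (Finset.sum_filter_of_ne ?_).symm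
    intro s hs hxs
    simp only [Finset.mem_filter] at hs
    by_contra hnc
    exact hxs (hvan s hs.2.1 hnc)
  rw [hsum_eq]
  set F := (univ.filter (fun s : Path St =>
      0 < p s ∧ ∀ n : (Dᶜ : Finset ν), s n.1 = sC n)).filter
        (fun s => PathCompat St D I z s) with hF
  have hFsub : F ⊆ univ.filter (fun s : Path St =>
      PathCompat St D I z s ∧ ∀ n : (Dᶜ : Finset ν), s n.1 = sC n) := by
    intro s hs
    simp only [hF, Finset.mem_filter] at hs ⊢
    exact ⟨Finset.mem_univ _, hs.2, hs.1.2.2⟩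
  have hFcard : F.card ≤ 1 := le_trans (Finset.card_le_card hFsub) hcard
  have hle1 : ∀ s ∈ F, x s ≤ 1 := by
    intro s hs
    simp only [hF, Finset.mem_filter] at hs
    exact (hbound s hs.1.2.1).2
  calc ∑ s ∈ F, x s ≤ ∑ _s ∈ F, (1 : ℝ) := Finset.sum_le_sum hle1
    _ = F.card := by simp
    _ ≤ 1 := by exact_mod_cast hFcard

end
end InfluenceDiagram
end

section
/- Assume the influence diagram is acyclic. Let (y, z) be an element of the reformulated feasible set RDP satisfying, in addition, the equality constraints Σ_{s_O∈E_O(s_{C_I})} y(s_O) = 1 for every segment s_{C_I} ∈ S_{C_I} := Π_{n∈C_I} S_n. Then for every s_O ∈ S_O, y(s_O) = 1 if and only if s_O is z-compatible (i.e., z(s_d | s_{I(d)}) = 1 for all d ∈ D, with s_d and s_{I(d)} extracted from s_O). -/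
open Finset

namespace InfluenceDiagram

attribute [local instance] Classical.propDecidable

variable {ν : Type} [Fintype ν] [DecidableEq ν]

noncomputable section
variable (St : ν → Type) [∀ n, Fintype (St n)] [∀ n, DecidableEq (St n)] [∀ n, Nonempty (St n)]
  (D : Finset ν) (I : ν → Finset ν)

lemma unique_one {α : Type} [Fintype α] {f : α → ℝ}
    (hbin : ∀ a, f a = 0 ∨ f a = 1) (hsum : ∑ a, f a = 1)
    {a b : α} (ha : f a = 1) (hb : f b = 1) : a = b := by
  by_contra hne
  have hsub : ({a, b} : Finset α) ⊆ univ := Finset.subset_univ _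
  have hle : ∑ x ∈ ({a, b} : Finset α), f x ≤ ∑ x, f x := by
    refine Finset.sum_le_sum_of_subset_of_nonneg hsub ?_
    intro i _ _; rcases hbin i with h | h <;> simp [h]
  rw [Finset.sum_pair hne, ha, hb, hsum] at hle
  linarith

lemma y_zero_of_not_compat (Γ z : ZAsg St D I) (y : OSeg St D I → ℝ)
    (hRDP : RDP St D I Γ z y) {tO : OSeg St D I}
    (h : ¬ SegCompat St D I z tO) : y tO = 0 := by
  obtain ⟨hz, hbox, hcon⟩ := hRDP
  simp only [SegCompat, not_forall] at h
  obtain ⟨d, hd, hne⟩ := h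
  have hz0 : z d hd (tO ⟨d, mem_obsSet_of_mem_D D I hd⟩)
      (fun n => tO ⟨n.1, mem_obsSet_of_mem_I D I hd n.2⟩) = 0 := by
    rcases hz.1 d hd (tO ⟨d, mem_obsSet_of_mem_D D I hd⟩)
      (fun n => tO ⟨n.1, mem_obsSet_of_mem_I D I hd n.2⟩) with h0 | h1
    · exact h0
    · exact absurd h1 hne
  have hcon' := hcon d hd (tO ⟨d, mem_obsSet_of_mem_D D I hd⟩)
    (fun n => tO ⟨n.1, mem_obsSet_of_mem_I D I hd n.2⟩)
  rw [hz0, mul_zero] at hcon'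
  have hmem : tO ∈ univ.filter (fun t : OSeg St D I =>
      t ⟨d, mem_obsSet_of_mem_D D I hd⟩ = tO ⟨d, mem_obsSet_of_mem_D D I hd⟩ ∧
      ∀ n : I d, t ⟨n.1, mem_obsSet_of_mem_I D I hd n.2⟩ =
        (fun n : I d => tO ⟨n.1, mem_obsSet_of_mem_I D I hd n.2⟩) n) := by
    simp
  have hle : y tO ≤ 0 := by
    refine le_trans (Finset.single_le_sum (fun t _ => (hbox t).1) hmem) hcon'
  exact le_antisymm hle (hbox tO).1

lemma compat_ext_unique (z : ZAsg St D I) (hacyc : Acyclic I)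
    (hz : Strategy St D I z) {t1 t2 : OSeg St D I}
    (h1 : SegCompat St D I z t1) (h2 : SegCompat St D I z t2)
    (hCI : ∀ n : CIset D I, t1 ⟨n.1, mem_obsSet_of_mem_CI D I n.2⟩ =
      t2 ⟨n.1, mem_obsSet_of_mem_CI D I n.2⟩) : t1 = t2 := by
  obtain ⟨r, hr⟩ := hacyc
  have key : ∀ k : ℕ, ∀ n : obsSet D I, r n.1 < k → t1 n = t2 n := by
    intro k
    induction k with
    | zero => intro n hn; omega
    | succ k ih =>
      intro n hn
      rcases Finset.mem_union.mp n.2 with hD | hC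
      · have hsI : (fun m : I n.1 => t1 ⟨m.1, mem_obsSet_of_mem_I D I hD m.2⟩) =
            (fun m : I n.1 => t2 ⟨m.1, mem_obsSet_of_mem_I D I hD m.2⟩) := by
          funext m
          exact ih ⟨m.1, mem_obsSet_of_mem_I D I hD m.2⟩
            (by show r m.1 < k; have := hr n.1 m.1 m.2; omega)
        have e1 := h1 n.1 hD
        have e2 := h2 n.1 hD
        rw [hsI] at e1
        exact unique_one (hz.1 n.1 hD · _) (hz.2 n.1 hD _) e1 e2
      · exact hCI ⟨n.1, hC⟩
  funext n
  exact key (r n.1 + 1) n (Nat.lt_succ_self _)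

/-- Proposition 6: for an acyclic influence diagram, if `(y, z)`
is RDP-feasible and the valid inequalities hold with equality, then `y(s_O) = 1`
iff the observable segment `s_O` is `z`-compatible. -/
theorem statement10 (Γ z : ZAsg St D I) (y : OSeg St D I → ℝ)
    (hacyc : Acyclic I) (hRDP : RDP St D I Γ z y)
    (heq : ∀ t : Seg St (CIset D I),
      ∑ tO ∈ univ.filter (fun tO : OSeg St D I =>
          ∀ n : CIset D I, tO ⟨n.1, mem_obsSet_of_mem_CI D I n.2⟩ = t n), y tO = 1) :
    ∀ tO : OSeg St D I, y tO = 1 ↔ SegCompat St D I z tO := by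
  intro tO
  constructor
  · intro hy
    by_contra hc
    have h0 := y_zero_of_not_compat St D I Γ z y hRDP hc
    rw [hy] at h0; norm_num at h0
  · intro hcomp
    have hsum := heq (fun n => tO ⟨n.1, mem_obsSet_of_mem_CI D I n.2⟩)
    have hmem : tO ∈ univ.filter (fun tO' : OSeg St D I =>
        ∀ n : CIset D I, tO' ⟨n.1, mem_obsSet_of_mem_CI D I n.2⟩ =
          tO ⟨n.1, mem_obsSet_of_mem_CI D I n.2⟩) := by simp
    rw [Finset.sum_eq_single_of_mem tO hmem ?_] at hsum
    · exact hsum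
    · intro t' ht' hne
      by_cases hc' : SegCompat St D I z t'
      · exact absurd (compat_ext_unique St D I z hacyc hRDP.1 hc' hcomp
          (Finset.mem_filter.mp ht').2) hne
      · exact y_zero_of_not_compat St D I Γ z y hRDP hc'

end
end InfluenceDiagram
end

section
/- If (x, z) is an element of the Decision Programming feasible set DP and x(s) > 0 for some s ∈ S^>, then the path s is z-compatible, i.e., z(s_d | s_{I(d)}) = 1 for every d ∈ D, with s_d and s_{I(d)} extracted from s. -/
open Finset

namespace InfluenceDiagram

attribute [local instance] Classical.propDecidable

variable {ν : Type} [Fintype ν] [DecidableEq ν]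

noncomputable section
variable (St : ν → Type) [∀ n, Fintype (St n)] [∀ n, DecidableEq (St n)] [∀ n, Nonempty (St n)]
  (D : Finset ν) (I : ν → Finset ν)

/-- a positive path variable in a DP-feasible solution forces the
corresponding path to be compatible with the decision strategy. -/
theorem statement11 (p : Path St → ℝ) (Γ z : ZAsg St D I) (x : Path St → ℝ)
    (hDP : DP St D I p Γ z x) (s : Path St) (hps : 0 < p s) (hxs : 0 < x s) :
    PathCompat St D I z s := by
  intro d hd
  obtain ⟨⟨hbin, _⟩, hx01, hcon⟩ := hDP
  rcases hbin d hd (s d) (fun n => s n.1) with h0 | h1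
  · exfalso
    have hc := hcon d hd (s d) (fun n => s n.1)
    rw [h0, mul_zero] at hc
    have hmem : s ∈ univ.filter (fun s' : Path St =>
        0 < p s' ∧ s' d = s d ∧ ∀ n : I d, s' n.1 = s n.1) := by
      simp [hps]
    have hpos : 0 < ∑ s' ∈ univ.filter (fun s' : Path St =>
        0 < p s' ∧ s' d = s d ∧ ∀ n : I d, s' n.1 = s n.1), x s' := by
      apply Finset.sum_pos'
      · intro i hi
        exact (hx01 i (Finset.mem_filter.mp hi).2.1).1
      · exact ⟨s, hmem, hxs⟩
    linarith
  · exact h1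


end
end InfluenceDiagram
end

section
/- If (y, z) is an element of the reformulated feasible set RDP and y(s_O) > 0 for some s_O ∈ S_O, then the segment s_O is z-compatible, i.e., z(s_d | s_{I(d)}) = 1 for every d ∈ D, with s_d and s_{I(d)} extracted from s_O. -/
open Finset

namespace InfluenceDiagram

attribute [local instance] Classical.propDecidable

variable {ν : Type} [Fintype ν] [DecidableEq ν]

noncomputable section
variable (St : ν → Type) [∀ n, Fintype (St n)] [∀ n, DecidableEq (St n)] [∀ n, Nonempty (St n)]
  (D : Finset ν) (I : ν → Finset ν)

/-- a positive observation variable in an RDP-feasible solution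
forces the corresponding observable segment to be compatible with the strategy. -/
theorem statement12 (Γ z : ZAsg St D I) (y : OSeg St D I → ℝ)
    (hRDP : RDP St D I Γ z y) (t : OSeg St D I) (hyt : 0 < y t) :
    SegCompat St D I z t := by
  obtain ⟨⟨hbin, _⟩, hy01, hcon⟩ := hRDP
  intro d hd
  set sd := t ⟨d, mem_obsSet_of_mem_D D I hd⟩
  set sI : Seg St (I d) := fun n => t ⟨n.1, mem_obsSet_of_mem_I D I hd n.2⟩
  rcases hbin d hd sd sI with h0 | h1
  · exfalso
    have hle := hcon d hd sd sI
    rw [h0, mul_zero] at hle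
    have htmem : t ∈ univ.filter (fun t : OSeg St D I =>
        t ⟨d, mem_obsSet_of_mem_D D I hd⟩ = sd ∧
        ∀ n : I d, t ⟨n.1, mem_obsSet_of_mem_I D I hd n.2⟩ = sI n) := by
      simp [sd, sI]
    have hlb : y t ≤ ∑ t' ∈ univ.filter (fun t' : OSeg St D I =>
        t' ⟨d, mem_obsSet_of_mem_D D I hd⟩ = sd ∧
        ∀ n : I d, t' ⟨n.1, mem_obsSet_of_mem_I D I hd n.2⟩ = sI n), y t' :=
      Finset.single_le_sum (fun t' _ => (hy01 t').1) htmem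
    linarith
  · exact h1

end
end InfluenceDiagram
end

section
/- Assume the influence diagram is acyclic and let z be a strategy. Then for every d ∈ D, s_d ∈ S_d and s_{I(d)} ∈ S_{I(d)}, the number of z-compatible paths in E(s_d, s_{I(d)}) is at most Π_{c∈C∖I(d)} |S_c|, which equals |E(s_d, s_{I(d)})| / Π_{k∈D∖({d}∪I(d))} |S_k|. Consequently, this quantity is a valid upper bound (big-M coefficient) on the number of z-compatible paths in E^>(s_d, s_{I(d)}). -/
open Finset

namespace InfluenceDiagram

attribute [local instance] Classical.propDecidable

variable {ν : Type} [Fintype ν] [DecidableEq ν]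

noncomputable section
variable (St : ν → Type) [∀ n, Fintype (St n)] [∀ n, DecidableEq (St n)] [∀ n, Nonempty (St n)]
  (D : Finset ν) (I : ν → Finset ν)

lemma strat_unique {z : ZAsg St D I} (hz : Strategy St D I z) {d : ν} (hd : d ∈ D)
    {a b : St d} {w : Seg St (I d)} (ha : z d hd a w = 1) (hb : z d hd b w = 1) : a = b := by
  by_contra hne
  have h0 : ∀ c : St d, 0 ≤ z d hd c w := fun c => by
    rcases hz.1 d hd c w with h | h <;> simp [h]
  have hsum := hz.2 d hd w
  have h1 : z d hd a w + z d hd b w ≤ ∑ c : St d, z d hd c w := by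
    calc z d hd a w + z d hd b w = ∑ c ∈ ({a, b} : Finset (St d)), z d hd c w := by
          rw [Finset.sum_pair hne]
      _ ≤ ∑ c : St d, z d hd c w :=
          Finset.sum_le_sum_of_subset_of_nonneg (Finset.subset_univ _) (fun c _ _ => h0 c)
  rw [ha, hb, hsum] at h1
  linarith

lemma card_fix (M : Finset ν) (u : ∀ n : M, St n.1) :
    (univ.filter (fun s : Path St => ∀ n : M, s n.1 = u n)).card
      = ∏ n ∈ Mᶜ, Fintype.card (St n) := by
  classical
  have e : {s : Path St // ∀ n : M, s n.1 = u n} ≃ (∀ n : (Mᶜ : Finset ν), St n.1) :=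
    { toFun := fun s n => s.1 n.1
      invFun := fun t =>
        ⟨fun n => if h : n ∈ M then u ⟨n, h⟩ else t ⟨n, Finset.mem_compl.mpr h⟩,
         fun n => by simp [n.2]⟩
      left_inv := fun s => by
        ext n
        by_cases h : n ∈ M
        · simp [h, s.2 ⟨n, h⟩]
        · simp [h]
      right_inv := fun t => by
        funext n
        have h : n.1 ∉ M := Finset.mem_compl.mp n.2
        simp [h] }
  have h1 : (univ.filter (fun s : Path St => ∀ n : M, s n.1 = u n)).card
      = Fintype.card {s : Path St // ∀ n : M, s n.1 = u n} := (Fintype.card_subtype _).symm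
  rw [h1, Fintype.card_congr e, Fintype.card_pi]
  exact Finset.prod_coe_sort Mᶜ (fun n => Fintype.card (St n))

/-- Extend `(s_d, s_{I(d)})` to a segment over `insert d (I d)`. -/
def extSeg (d : ν) (sd : St d) (sI : Seg St (I d)) :
    ∀ n : (insert d (I d) : Finset ν), St n.1 := fun n =>
  if h : n.1 ∈ I d then sI ⟨n.1, h⟩ else
    have h' : n.1 = d := by
      rcases Finset.mem_insert.mp n.2 with h' | h'
      · exact h'
      · exact absurd h' h
    h'.symm ▸ sd

lemma extSeg_mem (d : ν) (sd : St d) (sI : Seg St (I d)) {v : ν} (h : v ∈ I d) :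
    extSeg St I d sd sI ⟨v, Finset.mem_insert_of_mem h⟩ = sI ⟨v, h⟩ := by
  simp [extSeg, h]

lemma extSeg_self (d : ν) (sd : St d) (sI : Seg St (I d)) (hdI : d ∉ I d) :
    extSeg St I d sd sI ⟨d, Finset.mem_insert_self _ _⟩ = sd := by
  simp [extSeg, hdI]

/-- in an acyclic influence diagram, for any strategy `z`, the
number of `z`-compatible paths in `E(s_d, s_{I(d)})` is at most
`Π_{c ∈ C ∖ I(d)} |S_c|`, which equals
`|E(s_d, s_{I(d)})| / Π_{k ∈ D ∖ ({d} ∪ I(d))} |S_k|`; consequently this quantity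
also bounds the number of `z`-compatible paths in `E^>(s_d, s_{I(d)})`. -/
theorem statement16 (p : Path St → ℝ) (z : ZAsg St D I)
    (hacyc : Acyclic I) (hz : Strategy St D I z)
    (d : ν) (hd : d ∈ D) (sd : St d) (sI : Seg St (I d)) :
    ((univ.filter (fun s : Path St =>
        PathCompat St D I z s ∧ s d = sd ∧ ∀ n : I d, s n.1 = sI n)).card
      ≤ ∏ c ∈ Dᶜ \ I d, Fintype.card (St c)) ∧
    ((∏ c ∈ Dᶜ \ I d, Fintype.card (St c)) *
        ∏ k ∈ D \ insert d (I d), Fintype.card (St k)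
      = (univ.filter (fun s : Path St =>
          s d = sd ∧ ∀ n : I d, s n.1 = sI n)).card) ∧
    ((univ.filter (fun s : Path St =>
        PathCompat St D I z s ∧ 0 < p s ∧ s d = sd ∧ ∀ n : I d, s n.1 = sI n)).card
      ≤ ∏ c ∈ Dᶜ \ I d, Fintype.card (St c)) := by
  classical
  obtain ⟨r, hr⟩ := hacyc
  have hdI : d ∉ I d := fun h => lt_irrefl _ (hr d d h)
  -- Part 1
  have part1 : (univ.filter (fun s : Path St =>
      PathCompat St D I z s ∧ s d = sd ∧ ∀ n : I d, s n.1 = sI n)).card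
      ≤ ∏ c ∈ Dᶜ \ I d, Fintype.card (St c) := by
    have hinj : Set.InjOn (fun s : Path St => fun n : (Dᶜ \ I d : Finset ν) => s n.1)
        ↑(univ.filter (fun s : Path St =>
          PathCompat St D I z s ∧ s d = sd ∧ ∀ n : I d, s n.1 = sI n)) := by
      intro s hs s' hs' hfe
      simp only [Finset.coe_filter, Set.mem_setOf_eq, Finset.mem_univ, true_and] at hs hs'
      have key : ∀ k, ∀ n, r n < k → s n = s' n := by
        intro k
        induction k with
        | zero => intro n h; exact absurd h (Nat.not_lt_zero _)
        | succ k ih =>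
          intro n hn
          by_cases hnI : n ∈ I d
          · rw [hs.2.2 ⟨n, hnI⟩, hs'.2.2 ⟨n, hnI⟩]
          by_cases hnd : n = d
          · subst hnd; rw [hs.2.1, hs'.2.1]
          by_cases hnD : n ∈ D
          · have hw : (fun m : (I n : Finset ν) => s m.1)
                = (fun m : (I n : Finset ν) => s' m.1) := by
              funext m
              exact ih m.1 (lt_of_lt_of_le (hr n m.1 m.2) (Nat.lt_succ_iff.mp hn))
            have h1 := hs.1 n hnD
            have h2 := hs'.1 n hnD
            rw [hw] at h1
            exact strat_unique St D I hz hnD h1 h2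
          · have hnA : n ∈ Dᶜ \ I d :=
              Finset.mem_sdiff.mpr ⟨Finset.mem_compl.mpr hnD, hnI⟩
            exact congrFun hfe ⟨n, hnA⟩
      funext n
      exact key (r n + 1) n (Nat.lt_succ_self _)
    calc (univ.filter (fun s : Path St =>
          PathCompat St D I z s ∧ s d = sd ∧ ∀ n : I d, s n.1 = sI n)).card
        ≤ (univ : Finset (∀ n : (Dᶜ \ I d : Finset ν), St n.1)).card :=
          Finset.card_le_card_of_injOn _ (fun _ _ => Finset.mem_univ _) hinj
      _ = ∏ c ∈ Dᶜ \ I d, Fintype.card (St c) := by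
          rw [Finset.card_univ, Fintype.card_pi]
          exact Finset.prod_coe_sort (Dᶜ \ I d) (fun c => Fintype.card (St c))
  refine ⟨part1, ?_, ?_⟩
  · -- Part 2
    have hfilter : (univ.filter (fun s : Path St => s d = sd ∧ ∀ n : I d, s n.1 = sI n))
        = univ.filter (fun s : Path St =>
            ∀ n : (insert d (I d) : Finset ν), s n.1 = extSeg St I d sd sI n) := by
      apply Finset.filter_congr
      intro s _
      constructor
      · rintro ⟨h1, h2⟩ ⟨v, hv⟩
        by_cases h : v ∈ I d
        · exact (h2 ⟨v, h⟩).trans (extSeg_mem St I d sd sI h).symm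
        · have h' : v = d := by
            rcases Finset.mem_insert.mp hv with h' | h'
            · exact h'
            · exact absurd h' h
          subst h'
          exact h1.trans (extSeg_self St I v sd sI hdI).symm
      · intro h
        constructor
        · have := h ⟨d, Finset.mem_insert_self _ _⟩
          exact this.trans (extSeg_self St I d sd sI hdI)
        · intro n
          have := h ⟨n.1, Finset.mem_insert_of_mem n.2⟩
          exact this.trans (extSeg_mem St I d sd sI n.2)
    have hunion : (Dᶜ \ I d) ∪ (D \ insert d (I d)) = (insert d (I d))ᶜ := by
      ext n
      simp only [Finset.mem_union, Finset.mem_sdiff, Finset.mem_compl, Finset.mem_insert,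
        not_or]
      constructor
      · rintro (⟨h1, h2⟩ | ⟨h1, h2⟩)
        · exact ⟨fun he => h1 (he ▸ hd), h2⟩
        · exact h2
      · rintro ⟨h1, h2⟩
        by_cases hnD : n ∈ D
        · exact Or.inr ⟨hnD, h1, h2⟩
        · exact Or.inl ⟨hnD, h2⟩
    have hdisj : Disjoint (Dᶜ \ I d) (D \ insert d (I d)) := by
      rw [Finset.disjoint_left]
      intro n hn hn'
      exact Finset.mem_compl.mp (Finset.mem_sdiff.mp hn).1 (Finset.mem_sdiff.mp hn').1
    rw [hfilter, card_fix St (insert d (I d)) (extSeg St I d sd sI), ← hunion,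
      Finset.prod_union hdisj]
  · -- Part 3
    have hsub : (univ.filter (fun s : Path St =>
          PathCompat St D I z s ∧ 0 < p s ∧ s d = sd ∧ ∀ n : I d, s n.1 = sI n))
        ⊆ univ.filter (fun s : Path St =>
          PathCompat St D I z s ∧ s d = sd ∧ ∀ n : I d, s n.1 = sI n) := by
      intro s hs
      simp only [Finset.mem_filter] at hs ⊢
      tauto
    exact le_trans (Finset.card_le_card hsub) part1

end
end InfluenceDiagram
end
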